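/- arXiv:2107.06789 — 7 statements merged into one kernel-verified Lean document; each statement's English description precedes it below -/
import Mathlib

section
/- Let n ≥ k ≥ 5 be integers. Then there exist connected finite simple graphs X and Y, each on n vertices, such that δ(X) ≥ 3n/k − 4, δ(Y) ≥ (k−2)n/k − 3, and the friends-and-strangers graph FS(X,Y) is disconnected. -/
open SimpleGraph

/-- The friends-and-strangers graph `FS X Y` of two graphs `X`, `Y`: vertices are the
bijections from `V(X)` to `V(Y)`, and `σ`, `τ` are adjacent iff they agree everywhere except
at two vertices `a`, `b` adjacent in `X` whose images under `σ` are adjacent in `Y`,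
with `τ a = σ b` and `τ b = σ a`. -/
def FS {V W : Type*} (X : SimpleGraph V) (Y : SimpleGraph W) :
    SimpleGraph (V ≃ W) where
  Adj σ τ := ∃ a b : V, X.Adj a b ∧ Y.Adj (σ a) (σ b) ∧
      τ a = σ b ∧ τ b = σ a ∧ ∀ w : V, w ≠ a → w ≠ b → τ w = σ w
  symm := by
    constructor
    rintro σ τ ⟨a, b, hX, hY, h1, h2, h3⟩
    exact ⟨a, b, hX, by rw [h1, h2]; exact hY.symm, h2.symm, h1.symm,
      fun w hwa hwb => (h3 w hwa hwb).symm⟩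
  loopless := by
    constructor
    rintro σ ⟨a, b, hX, _, h1, _, _⟩
    exact hX.ne (σ.injective h1)

/-- The minimum degree of a graph (stated via `Set.ncard`, so that no decidability
assumptions are required). -/
noncomputable def minDeg {V : Type*} (G : SimpleGraph V) : ℕ :=
  ⨅ v : V, (G.neighborSet v).ncard

/-- Vertices `u`, `v` of `Y` are `(X,Y)`-exchangeable from `σ` if `σ` and `(u v) ∘ σ`
lie in the same connected component of `FS X Y`. -/
def Exchangeable {V W : Type*} (X : SimpleGraph V) (Y : SimpleGraph W)
    (σ : V ≃ W) (u v : W) : Prop :=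
  letI := Classical.decEq W
  (FS X Y).Reachable σ (σ.trans (Equiv.swap u v))

/-! Split `Fin n` into the residue classes mod `k`, arranged in a cycle. `X` joins vertices whose
classes are equal or cyclically adjacent, `Y` joins vertices whose classes are not cyclically
adjacent; both are connected, and classes of size `⌊n/k⌋` or `⌊n/k⌋ + 1` give the degree bounds.
If `r (σ x) + r x = c` for all `x` (`r` the residue map), then the labels `σ a, σ b` of a
potential swap differ by the negative of `r a - r b`, so they can be adjacent in `Y` only when
`a, b` lie in the same class, and then the swap preserves the identity. The reversal of `Fin n`
satisfies it with `c = n - 1` and the identity satisfies it for no `c`, so `FS X Y` is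
disconnected. -/

theorem exists_neighborSet_ncard_eq_minDeg {V : Type*} [Nonempty V] (G : SimpleGraph V) :
    ∃ v, (G.neighborSet v).ncard = minDeg G :=
  ciInf_mem _

section NearFar

variable {V G : Type*}

def nearGraph [Add G] [One G] (f : V → G) : SimpleGraph V where
  Adj i j := i ≠ j ∧ (f i = f j ∨ f i = f j + 1 ∨ f j = f i + 1)
  symm := ⟨fun _ _ ⟨hne, h⟩ => ⟨hne.symm, by rcases h with h | h | h <;> simp [h]⟩⟩
  loopless := ⟨fun _ h => h.1 rfl⟩

def farGraph [Add G] [One G] (f : V → G) : SimpleGraph V where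
  Adj i j := i ≠ j ∧ f i ≠ f j + 1 ∧ f j ≠ f i + 1
  symm := ⟨fun _ _ ⟨hne, h₁, h₂⟩ => ⟨hne.symm, h₂, h₁⟩⟩
  loopless := ⟨fun _ h => h.1 rfl⟩

def Reflects [Add G] (f : V → G) (c : G) (σ : V ≃ V) : Prop :=
  ∀ x, f (σ x) + f x = c

variable [AddCommGroup G] [One G] {f : V → G} {c : G} {σ τ : V ≃ V}

theorem Reflects.of_FS_adj (hσ : Reflects f c σ) (h : (FS (nearGraph f) (farGraph f)).Adj σ τ) :
    Reflects f c τ := by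
  obtain ⟨a, b, ⟨-, hab⟩, ⟨-, hσab, hσba⟩, hτa, hτb, hτ⟩ := h
  have hlevel : f a = f b := by
    have hsum : f (σ a) + f a = f (σ b) + f b := (hσ a).trans (hσ b).symm
    rcases hab with h | h | h
    · exact h
    · exact absurd (add_right_cancel (b := f b) (by rw [← hsum, h]; abel)) hσba
    · exact absurd (add_right_cancel (b := f a) (by rw [hsum, h]; abel)) hσab
  intro x
  by_cases hxa : x = a
  · rw [hxa, hτa, hlevel, hσ b]
  by_cases hxb : x = b
  · rw [hxb, hτb, ← hlevel, hσ a]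
  rw [hτ x hxa hxb, hσ x]

theorem Reflects.of_FS_reachable (hσ : Reflects f c σ)
    (h : (FS (nearGraph f) (farGraph f)).Reachable σ τ) : Reflects f c τ := by
  rw [reachable_iff_reflTransGen] at h
  induction h with
  | refl => exact hσ
  | tail _ hadj ih => exact ih.of_FS_adj hadj

end NearFar

theorem ZMod.natCast_ne_zero_of_pos_of_lt {k m : ℕ} (h0 : 0 < m) (hm : m < k) :
    (m : ZMod k) ≠ 0 := by
  rw [Ne, ZMod.natCast_eq_zero_iff]
  exact Nat.not_dvd_of_pos_of_lt h0 hm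

section Residue

variable {n k : ℕ}

def residue (n k : ℕ) (i : Fin n) : ZMod k := (i : ℕ)

theorem ncard_residue_preimage [NeZero k] (a : ZMod k) :
    (residue n k ⁻¹' {a}).ncard = n / k + if a.val < n % k then 1 else 0 := by
  rw [← Nat.mod_eq_of_lt a.val_lt, ← Nat.count_modEq_card n (NeZero.pos k),
    Nat.count_eq_card_filter_range, ← Set.ncard_coe_finset,
    ← Set.ncard_image_of_injective _ Fin.val_injective]
  congr 1
  ext x
  simp only [Set.mem_image, Set.mem_ofPred_eq, Finset.coe_filter, Finset.mem_range]
  rw [← ZMod.natCast_eq_natCast_iff, ZMod.natCast_zmod_val]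
  exact ⟨fun ⟨i, hi, hix⟩ => hix ▸ ⟨i.isLt, hi⟩, fun ⟨hx, hxa⟩ => ⟨⟨x, hx⟩, hxa, rfl⟩⟩

theorem div_le_ncard_residue_preimage [NeZero k] (a : ZMod k) :
    n / k ≤ (residue n k ⁻¹' {a}).ncard := by
  rw [ncard_residue_preimage]; omega

theorem ncard_residue_preimage_le [NeZero k] (a : ZMod k) :
    (residue n k ⁻¹' {a}).ncard ≤ n / k + 1 := by
  rw [ncard_residue_preimage]; split_ifs <;> omega

theorem reflects_residue_revPerm : Reflects (residue n k) ((n - 1 : ℕ) : ZMod k) Fin.revPerm :=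
  fun i => by
    rw [Fin.revPerm_apply, residue, residue, Fin.val_rev, ← Nat.cast_add]
    congr 1
    omega

theorem not_connected_FS_nearGraph_farGraph_residue (hk : 3 ≤ k) (hn : 2 ≤ n) :
    ¬ (FS (nearGraph (residue n k)) (farGraph (residue n k))).Connected := by
  intro hconn
  have hrefl : Reflects (residue n k) ((n - 1 : ℕ) : ZMod k) (Equiv.refl (Fin n)) :=
    reflects_residue_revPerm.of_FS_reachable (hconn.preconnected _ _)
  have h0 := hrefl ⟨0, by omega⟩
  have h1 := hrefl ⟨1, by omega⟩
  simp only [Equiv.refl_apply, residue, Nat.cast_zero, Nat.cast_one] at h0 h1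
  exact ZMod.natCast_ne_zero_of_pos_of_lt (k := k) (m := 2) (by omega) (by omega)
    (by push_cast; linear_combination h1 - h0)

theorem nearGraph_residue_connected [NeZero n] : (nearGraph (residue n k)).Connected := by
  refine ⟨(pathGraph_preconnected n).mono fun u v huv => ?_⟩
  rw [pathGraph_adj] at huv
  refine ⟨fun h => by subst h; omega, ?_⟩
  rcases huv with h | h
  · exact Or.inr (Or.inr (by rw [residue, residue, ← h, Nat.cast_succ]))
  · exact Or.inr (Or.inl (by rw [residue, residue, ← h, Nat.cast_succ]))

theorem farGraph_residue_connected (hk : 5 ≤ k) (hn : 4 ≤ n) :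
    (farGraph (residue n k)).Connected := by
  have hnz : ∀ m : ℕ, 0 < m → m < k → (m : ZMod k) ≠ 0 := fun _ =>
    ZMod.natCast_ne_zero_of_pos_of_lt
  have h1 : (1 : ZMod k) ≠ 0 := by exact_mod_cast hnz 1 (by omega) (by omega)
  have h2 : (2 : ZMod k) ≠ 0 := by exact_mod_cast hnz 2 (by omega) (by omega)
  have h3 : (3 : ZMod k) ≠ 0 := by exact_mod_cast hnz 3 (by omega) (by omega)
  have h4 : (4 : ZMod k) ≠ 0 := by exact_mod_cast hnz 4 (by omega) (by omega)
  have hreach : ∀ i j : Fin n, residue n k i ≠ residue n k j + 1 →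
      residue n k j ≠ residue n k i + 1 → (farGraph (residue n k)).Reachable i j := fun i j h h' =>
    if hij : i = j then hij ▸ .rfl else Adj.reachable (G := farGraph _) ⟨hij, h, h'⟩
  set r₀ : Fin n := ⟨0, by omega⟩
  set r₂ : Fin n := ⟨2, by omega⟩
  set r₃ : Fin n := ⟨3, by omega⟩
  have hr₀ : residue n k r₀ = 0 := by simp [r₀, residue]
  have hr₂ : residue n k r₂ = 2 := by simp [r₂, residue]
  have hr₃ : residue n k r₃ = 3 := by simp [r₃, residue]
  -- `r₀` is adjacent to every vertex outside the residues `±1`; those in `1` reach it via `r₃`,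
  -- those in `-1` via `r₂`
  have hub : ∀ i, (farGraph (residue n k)).Reachable i r₀ := by
    intro i
    by_cases hi₁ : residue n k i = 1
    · refine (hreach i r₃ ?_ ?_).trans (hreach r₃ r₀ ?_ ?_) <;> simp only [hi₁, hr₀, hr₃] <;>
        rw [ne_eq, ← sub_eq_zero] <;> norm_num [h1, h2, h3, h4]
    by_cases hi₂ : residue n k i = -1
    · refine (hreach i r₂ ?_ ?_).trans (hreach r₂ r₀ ?_ ?_) <;> simp only [hi₂, hr₀, hr₂] <;>
        rw [ne_eq, ← sub_eq_zero] <;> norm_num [h1, h2, h3, h4]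
    exact hreach i r₀ (by rwa [hr₀, zero_add])
      (by rw [hr₀]; exact fun h => hi₂ (by linear_combination -h))
  exact (connected_iff _).2 ⟨fun i j => (hub i).trans (hub j).symm, ⟨r₀⟩⟩

theorem three_mul_div_le_ncard_neighborSet_nearGraph_residue_add_one [NeZero k] (hk : 3 ≤ k)
    (v : Fin n) : 3 * (n / k) ≤ ((nearGraph (residue n k)).neighborSet v).ncard + 1 := by
  set a := residue n k v
  have h1 : (1 : ZMod k) ≠ 0 := by
    exact_mod_cast ZMod.natCast_ne_zero_of_pos_of_lt (k := k) one_pos (by omega)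
  have h2 : (2 : ZMod k) ≠ 0 := by
    exact_mod_cast ZMod.natCast_ne_zero_of_pos_of_lt (k := k) two_pos (by omega)
  have hsub : residue n k ⁻¹' {a} ∪ residue n k ⁻¹' {a + 1} ∪ residue n k ⁻¹' {a - 1} ⊆
      insert v ((nearGraph (residue n k)).neighborSet v) := by
    intro j hj
    by_cases hjv : j = v
    · exact .inl hjv
    refine .inr ⟨Ne.symm hjv, ?_⟩
    simp only [Set.mem_union, Set.mem_preimage, Set.mem_singleton_iff] at hj
    rcases hj with (hj | hj) | hj
    · exact .inl hj.symm
    · exact .inr (.inr hj)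
    · exact .inr (.inl (by rw [hj, sub_add_cancel]))
  have hdisj₁ : Disjoint (residue n k ⁻¹' {a}) (residue n k ⁻¹' {a + 1}) :=
    .preimage _ (Set.disjoint_singleton.2 fun h => h1 (by linear_combination -h))
  have hdisj₂ : Disjoint (residue n k ⁻¹' {a} ∪ residue n k ⁻¹' {a + 1})
      (residue n k ⁻¹' {a - 1}) :=
    .union_left (.preimage _ (Set.disjoint_singleton.2 fun h => h1 (by linear_combination h)))
      (.preimage _ (Set.disjoint_singleton.2 fun h => h2 (by linear_combination h)))
  calc 3 * (n / k) ≤ (residue n k ⁻¹' {a}).ncard + (residue n k ⁻¹' {a + 1}).ncard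
        + (residue n k ⁻¹' {a - 1}).ncard := by
        have := div_le_ncard_residue_preimage (n := n) a
        have := div_le_ncard_residue_preimage (n := n) (a + 1)
        have := div_le_ncard_residue_preimage (n := n) (a - 1)
        omega
    _ = (residue n k ⁻¹' {a} ∪ residue n k ⁻¹' {a + 1} ∪ residue n k ⁻¹' {a - 1}).ncard := by
        rw [Set.ncard_union_eq hdisj₂, Set.ncard_union_eq hdisj₁]
    _ ≤ (insert v ((nearGraph (residue n k)).neighborSet v)).ncard := Set.ncard_le_ncard hsub
    _ ≤ ((nearGraph (residue n k)).neighborSet v).ncard + 1 := Set.ncard_insert_le _ _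

theorem le_ncard_neighborSet_farGraph_residue_add [NeZero k] (v : Fin n) :
    n ≤ ((farGraph (residue n k)).neighborSet v).ncard + 2 * (n / k) + 3 := by
  set a := residue n k v
  have hcover : Set.univ ⊆ (farGraph (residue n k)).neighborSet v ∪
      insert v (residue n k ⁻¹' {a + 1} ∪ residue n k ⁻¹' {a - 1}) := by
    intro j _
    by_cases hjv : j = v
    · exact .inr (.inl hjv)
    by_cases hj₁ : residue n k j = a + 1
    · exact .inr (.inr (.inl hj₁))
    by_cases hj₂ : residue n k j = a - 1
    · exact .inr (.inr (.inr hj₂))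
    exact .inl ⟨Ne.symm hjv, fun h => hj₂ (eq_sub_of_add_eq h.symm), hj₁⟩
  calc n = (Set.univ : Set (Fin n)).ncard := by simp
    _ ≤ ((farGraph (residue n k)).neighborSet v ∪
          insert v (residue n k ⁻¹' {a + 1} ∪ residue n k ⁻¹' {a - 1})).ncard :=
        Set.ncard_le_ncard hcover
    _ ≤ ((farGraph (residue n k)).neighborSet v).ncard +
          ((residue n k ⁻¹' {a + 1} ∪ residue n k ⁻¹' {a - 1}).ncard + 1) :=
        (Set.ncard_union_le _ _).trans (Nat.add_le_add_left (Set.ncard_insert_le _ _) _)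
    _ ≤ ((farGraph (residue n k)).neighborSet v).ncard +
          ((residue n k ⁻¹' {a + 1}).ncard + (residue n k ⁻¹' {a - 1}).ncard + 1) := by
        gcongr; exact Set.ncard_union_le _ _
    _ ≤ ((farGraph (residue n k)).neighborSet v).ncard + 2 * (n / k) + 3 := by
        have := ncard_residue_preimage_le (n := n) (a + 1)
        have := ncard_residue_preimage_le (n := n) (a - 1)
        omega

end Residue

theorem statement4 (n k : ℕ) (hk : 5 ≤ k) (hn : k ≤ n) :
    ∃ X Y : SimpleGraph (Fin n), X.Connected ∧ Y.Connected ∧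
      (minDeg X : ℚ) ≥ 3 * n / k - 4 ∧
      (minDeg Y : ℚ) ≥ ((k : ℚ) - 2) * n / k - 3 ∧
      ¬ (FS X Y).Connected := by
  have : NeZero k := ⟨by omega⟩
  have : NeZero n := ⟨by omega⟩
  obtain ⟨v, hv⟩ := exists_neighborSet_ncard_eq_minDeg (nearGraph (residue n k))
  obtain ⟨w, hw⟩ := exists_neighborSet_ncard_eq_minDeg (farGraph (residue n k))
  have hdegX : (3 * (n / k : ℕ) : ℚ) ≤ minDeg (nearGraph (residue n k)) + 1 := by
    exact_mod_cast hv ▸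
      three_mul_div_le_ncard_neighborSet_nearGraph_residue_add_one (k := k) (by omega) v
  have hdegY : (n : ℚ) ≤ minDeg (farGraph (residue n k)) + 2 * (n / k : ℕ) + 3 := by
    exact_mod_cast hw ▸ le_ncard_neighborSet_farGraph_residue_add (k := k) w
  have hdiv_le : ((n / k : ℕ) : ℚ) ≤ n / k := Nat.cast_div_le
  have hlt_div : (n / k : ℚ) < (n / k : ℕ) + 1 := by
    rw [← Nat.floor_div_eq_div (K := ℚ)]
    exact Nat.lt_floor_add_one _
  refine ⟨_, _, nearGraph_residue_connected, farGraph_residue_connected hk (by omega), ?_, ?_,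
    not_connected_FS_nearGraph_farGraph_residue (by omega) (by omega)⟩
  · rw [ge_iff_le, mul_div_assoc]
    linarith
  · rw [ge_iff_le, show ((k : ℚ) - 2) * n / k = n - 2 * (n / k) by field_simp]
    linarith
end

section
/- Let r ≥ 2, and let δ₁, δ₂ be non-negative integers satisfying δ₁ + δ₂ = ⌊3r/2⌋, δ₁ ≤ r, and δ₂ ≤ r. Then there exist edge-subgraphs X and Y of K_{r,r} such that δ(X) = δ₁, δ(Y) = δ₂, and the friends-and-strangers graph FS(X,Y) has more than two connected components. -/
open SimpleGraph

/-!
Split each side of `K_{r,r}` into a block of size `m = ⌊r/2⌋` and one of size `k = ⌈r/2⌉`.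
Both `X` and `Y` contain every edge between the `m`-block of one side and the `k`-block of the
other; between the two `m`-blocks, and between the two `k`-blocks, `X` is a regular bipartite
graph (a circulant) and `Y` is its complement there. With `c = r - δ₂`, circulants of degrees
`min c m` and `c` give `δ(X) = m + c = δ₁` and `δ(Y) = r - c = δ₂`.

The bijection `σ₀` exchanging the two `m`-blocks is isolated in `FS(X, Y)`: it sends an
`X`-edge inside a pair of blocks to a non-edge of `Y`, and an edge across blocks into a single
side. For bipartite `X` and `Y`, every move of `FS(X, Y)` is a transposition moving exactly one
vertex of the left side across, so `sign σ · (-1)^#{left vertices sent to the right}` is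
constant on components. Composing `σ₀` with one, resp. two, transpositions inside a side gives
two more bijections, with different values of this invariant.
-/

open Equiv Function

lemma Std.Symm.comp {α β : Type*} {R : β → β → Prop} (h : Std.Symm R) (f : α → β) :
    Std.Symm fun x y => R (f x) (f y) :=
  ⟨fun x y => h.symm (f x) (f y)⟩

lemma Std.Symm.not {α : Type*} {R : α → α → Prop} (h : Std.Symm R) :
    Std.Symm fun x y => ¬ R x y :=
  ⟨fun x y hxy hyx => hxy (h.symm y x hyx)⟩

namespace FriendsAndStrangers

section Bipartite

variable {α β : Type*}

def bipartiteOfRel (P : α → β → Prop) : SimpleGraph (α ⊕ β) where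
  Adj
    | .inl a, .inr b => P a b
    | .inr b, .inl a => P a b
    | _, _ => False
  symm := by constructor; rintro (a | b) (a' | b') h <;> exact h
  loopless := by constructor; rintro (a | b) h <;> exact h

variable {P : α → β → Prop}

@[simp] lemma bipartiteOfRel_adj_inl_inr {a : α} {b : β} :
    (bipartiteOfRel P).Adj (.inl a) (.inr b) ↔ P a b := Iff.rfl

@[simp] lemma bipartiteOfRel_adj_inr_inl {a : α} {b : β} :
    (bipartiteOfRel P).Adj (.inr b) (.inl a) ↔ P a b := Iff.rfl

@[simp] lemma not_bipartiteOfRel_adj_inl_inl {a a' : α} :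
    ¬ (bipartiteOfRel P).Adj (.inl a) (.inl a') := id

@[simp] lemma not_bipartiteOfRel_adj_inr_inr {b b' : β} :
    ¬ (bipartiteOfRel P).Adj (.inr b) (.inr b') := id

lemma bipartiteOfRel_le_completeBipartiteGraph :
    bipartiteOfRel P ≤ completeBipartiteGraph α β := by
  rintro (a | b) (a' | b') h <;> simp_all

lemma ncard_neighborSet_bipartiteOfRel_inl (a : α) :
    ((bipartiteOfRel P).neighborSet (.inl a)).ncard = {b | P a b}.ncard := by
  have : (bipartiteOfRel P).neighborSet (.inl a) = Sum.inr '' {b | P a b} := by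
    ext (a' | b) <;> simp
  rw [this, Set.ncard_image_of_injective _ Sum.inr_injective]

lemma ncard_neighborSet_bipartiteOfRel_inr (b : β) :
    ((bipartiteOfRel P).neighborSet (.inr b)).ncard = {a | P a b}.ncard := by
  have : (bipartiteOfRel P).neighborSet (.inr b) = Sum.inl '' {a | P a b} := by
    ext (a | b') <;> simp
  rw [this, Set.ncard_image_of_injective _ Sum.inl_injective]

end Bipartite

lemma minDeg_eq_of_forall_le_of_exists {V : Type*} (G : SimpleGraph V) {d : ℕ}
    (hle : ∀ v, d ≤ (G.neighborSet v).ncard) (hex : ∃ v, (G.neighborSet v).ncard = d) :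
    minDeg G = d := by
  obtain ⟨v, hv⟩ := hex
  have : Nonempty V := ⟨v⟩
  exact le_antisymm (hv ▸ ciInf_le (OrderBot.bddBelow _) v) (le_ciInf hle)

lemma minDeg_bipartiteOfRel {α : Type*} {P : α → α → Prop} (hP : Std.Symm P) {d : ℕ}
    (hle : ∀ a, d ≤ {b | P a b}.ncard) (hex : ∃ a, {b | P a b}.ncard = d) :
    minDeg (bipartiteOfRel P) = d := by
  have hcol : ∀ b, {a | P a b} = {a | P b a} := fun b =>
    Set.ext fun a => ⟨hP.symm a b, hP.symm b a⟩
  obtain ⟨a, ha⟩ := hex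
  refine minDeg_eq_of_forall_le_of_exists _ ?_
    ⟨.inl a, by rwa [ncard_neighborSet_bipartiteOfRel_inl]⟩
  rintro (a' | b)
  · rw [ncard_neighborSet_bipartiteOfRel_inl]; exact hle a'
  · rw [ncard_neighborSet_bipartiteOfRel_inr, hcol]; exact hle b

lemma eq_swap_trans_of_swap_values {V W : Type*} [DecidableEq V] {σ τ : V ≃ W} {a b : V}
    (h₁ : τ a = σ b) (h₂ : τ b = σ a) (h₃ : ∀ w, w ≠ a → w ≠ b → τ w = σ w) :
    τ = (swap a b).trans σ := by
  ext w
  rw [trans_apply, swap_apply_def]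
  split_ifs with ha hb
  · rw [ha, h₁]
  · rw [hb, h₂]
  · exact h₃ w ha hb

section CrossSign

variable {α β : Type*}

def sideSign : α ⊕ β → ℤˣ := Sum.elim (fun _ => 1) (fun _ => -1)

lemma sideSign_eq_neg_of_adj {u v : α ⊕ β} (h : (completeBipartiteGraph α β).Adj u v) :
    sideSign v = -sideSign u := by
  rcases u with a | b <;> rcases v with a' | b' <;> simp_all [sideSign]

lemma sideSign_swap_apply [DecidableEq α] [DecidableEq β] {u v : α ⊕ β}
    (h : sideSign u = sideSign v) (w : α ⊕ β) :
    sideSign (swap u v w) = sideSign w := by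
  rw [swap_apply_def]; split_ifs <;> simp_all

variable [Fintype α] [DecidableEq α] [Fintype β] [DecidableEq β]

def crossSign (σ : Perm (α ⊕ β)) : ℤˣ :=
  Perm.sign σ * ∏ a, sideSign (σ (.inl a))

lemma crossSign_trans_swap (σ : Perm (α ⊕ β)) {u v : α ⊕ β} (huv : u ≠ v)
    (h : sideSign u = sideSign v) : crossSign (σ.trans (swap u v)) = -crossSign σ := by
  simp only [crossSign, Equiv.trans_apply, sideSign_swap_apply h]
  rw [← Perm.mul_def, map_mul, Perm.sign_swap huv, neg_one_mul, neg_mul]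

lemma crossSign_eq_of_swap_values {σ τ : Perm (α ⊕ β)} {a : α} {b : β}
    (hY : (completeBipartiteGraph α β).Adj (σ (.inl a)) (σ (.inr b)))
    (h₁ : τ (.inl a) = σ (.inr b)) (h₂ : τ (.inr b) = σ (.inl a))
    (h₃ : ∀ w, w ≠ .inl a → w ≠ .inr b → τ w = σ w) :
    crossSign τ = crossSign σ := by
  have hsign : Perm.sign τ = -Perm.sign σ := by
    rw [eq_swap_trans_of_swap_values h₁ h₂ h₃, ← Perm.mul_def, map_mul,
      Perm.sign_swap Sum.inl_ne_inr, mul_neg_one]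
  have hprod : ∏ a', sideSign (τ (.inl a')) = -∏ a', sideSign (σ (.inl a')) := by
    rw [← Finset.mul_prod_erase _ _ (Finset.mem_univ a),
      ← Finset.mul_prod_erase _ _ (Finset.mem_univ a), h₁, sideSign_eq_neg_of_adj hY, neg_mul]
    congr 2
    refine Finset.prod_congr rfl fun a' ha' => ?_
    rw [h₃ _ (by simpa using Finset.ne_of_mem_erase ha') Sum.inl_ne_inr]
  rw [crossSign, crossSign, hsign, hprod, neg_mul_neg]

lemma crossSign_eq_of_adj {X Y : SimpleGraph (α ⊕ β)}
    (hX : X ≤ completeBipartiteGraph α β) (hY : Y ≤ completeBipartiteGraph α β)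
    {σ τ : Perm (α ⊕ β)} (h : (FS X Y).Adj σ τ) : crossSign τ = crossSign σ := by
  obtain ⟨u, v, huv, hσ, h₁, h₂, h₃⟩ := h
  rcases u with a | b <;> rcases v with a' | b'
  · simpa using hX huv
  · exact crossSign_eq_of_swap_values (hY hσ) h₁ h₂ h₃
  · exact crossSign_eq_of_swap_values (hY hσ.symm) h₂ h₁ fun w hw hw' => h₃ w hw' hw
  · simpa using hX huv

end CrossSign

section SideSwap

variable {α : Type*} (p : α → Prop) [DecidablePred p]

def sideSwap : Perm (α ⊕ α) :=
  Involutive.toPerm (fun w => if p (w.elim id id) then w.swap else w) <| by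
    rintro (a | a) <;> by_cases h : p a <;> simp [h]

@[simp] lemma sideSwap_inl (a : α) : sideSwap p (.inl a) = if p a then .inr a else .inl a := rfl

@[simp] lemma sideSwap_inr (a : α) : sideSwap p (.inr a) = if p a then .inl a else .inr a := rfl

lemma not_FS_adj_sideSwap {P Q : α → α → Prop} (hQ : Std.Symm Q)
    (h : ∀ a b, (p a ↔ p b) → P a b → ¬ Q a b) (τ : Perm (α ⊕ α)) :
    ¬ (FS (bipartiteOfRel P) (bipartiteOfRel Q)).Adj (sideSwap p) τ := by
  rintro ⟨u, v, huv, hσ, -⟩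
  rcases u with a | a <;> rcases v with b | b
  · simp at huv
  · by_cases ha : p a <;> by_cases hb : p b <;> simp_all
    exact h a b (iff_of_true ha hb) huv (hQ.symm _ _ hσ)
  · by_cases ha : p a <;> by_cases hb : p b <;> simp_all
    exact h b a (iff_of_true hb ha) huv (hQ.symm _ _ hσ)
  · simp at huv

end SideSwap

lemma two_lt_card_connectedComponent_of_isolated {V M : Type*} [Finite V] {G : SimpleGraph V}
    (f : V → M) (hf : ∀ ⦃x y⦄, G.Adj x y → f y = f x) {v w₁ w₂ : V}
    (hv : ∀ x, ¬ G.Adj v x) (h₁ : w₁ ≠ v) (h₂ : w₂ ≠ v)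
    (h₁₂ : f w₁ ≠ f w₂) :
    2 < Nat.card G.ConnectedComponent := by
  have hf' : ∀ {x y}, G.Reachable x y → f y = f x := by
    rintro x y ⟨p⟩
    induction p with
    | nil => rfl
    | cons h _ ih => rw [ih, hf h]
  have hv' : ∀ {x}, G.Reachable v x → x = v := by
    rintro x ⟨_ | ⟨h, _⟩⟩
    · rfl
    · exact absurd h (hv _)
  have := Fintype.ofFinite V
  rw [Nat.card_eq_fintype_card, Fintype.two_lt_card_iff]
  refine ⟨G.connectedComponentMk v, G.connectedComponentMk w₁, G.connectedComponentMk w₂,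
    ?_, ?_, ?_⟩ <;> rw [Ne, ConnectedComponent.eq]
  · exact fun h => h₁ (hv' h)
  · exact fun h => h₂ (hv' h)
  · exact fun h => h₁₂ (hf' h).symm

lemma two_lt_card_connectedComponent_FS {α : Type*} [Fintype α] [DecidableEq α] [Nontrivial α]
    (p : α → Prop) [DecidablePred p] {P Q : α → α → Prop} (hQ : Std.Symm Q)
    (h : ∀ a b, (p a ↔ p b) → P a b → ¬ Q a b) :
    2 < Nat.card (FS (bipartiteOfRel P) (bipartiteOfRel Q)).ConnectedComponent := by
  obtain ⟨a, b, hab⟩ := exists_pair_ne α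
  set σ₁ := (sideSwap p).trans (swap (.inl a) (.inl b))
  set σ₂ := σ₁.trans (swap (.inr a) (.inr b))
  have hσ₁ : crossSign σ₁ = -crossSign (sideSwap p) :=
    crossSign_trans_swap _ (Sum.inl_injective.ne hab) rfl
  have hσ₂ : crossSign σ₂ = crossSign (sideSwap p) := by
    rw [crossSign_trans_swap σ₁ (Sum.inr_injective.ne hab) rfl, hσ₁, neg_neg]
  refine two_lt_card_connectedComponent_of_isolated crossSign
    (fun _ _ => crossSign_eq_of_adj bipartiteOfRel_le_completeBipartiteGraph
      bipartiteOfRel_le_completeBipartiteGraph)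
    (not_FS_adj_sideSwap p hQ h) (w₁ := σ₁) (w₂ := σ₂) ?_ ?_ ?_
  · intro h
    have := congrArg (· ((sideSwap p).symm (.inl a))) h
    simp only [σ₁, trans_apply, apply_symm_apply, swap_apply_left] at this
    exact hab (Sum.inl_injective this).symm
  · intro h
    have := congrArg (· ((sideSwap p).symm (.inl a))) h
    simp only [σ₂, σ₁, trans_apply, apply_symm_apply, swap_apply_left,
      swap_apply_of_ne_of_ne Sum.inl_ne_inr Sum.inl_ne_inr] at this
    exact hab (Sum.inl_injective this).symm
  · rw [hσ₁, hσ₂]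
    exact neg_units_ne_self _

lemma exists_symm_ncard_setOf_eq {m a : ℕ} (ha : a ≤ m) :
    ∃ C : Fin m → Fin m → Prop, Std.Symm C ∧ ∀ i, {j | C i j}.ncard = a := by
  obtain _ | m := m
  · exact ⟨fun _ _ => False, ⟨fun _ _ => id⟩, fun i => i.elim0⟩
  refine ⟨fun i j => (i + j).val < a, ⟨fun i j => by rw [add_comm j i]; exact id⟩,
    fun i => ?_⟩
  have : {j : Fin (m + 1) | (i + j).val < a} =
      Equiv.addLeft i ⁻¹' Set.range (Fin.castLE ha) := by
    ext j; simp [Fin.range_castLE]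
  rw [this, Set.ncard_preimage_of_injective_subset_range (Equiv.injective _)
      fun y _ => Equiv.surjective _ y,
    Set.ncard_range_of_injective (Fin.castLE_injective ha), Nat.card_eq_fintype_card,
    Fintype.card_fin]

section BlockRel

variable {A B : Type*}

def blockRel (CA : A → A → Prop) (CB : B → B → Prop) : A ⊕ B → A ⊕ B → Prop
  | .inl i, .inl j => CA i j
  | .inr i, .inr j => CB i j
  | _, _ => True

variable {CA : A → A → Prop} {CB : B → B → Prop}

lemma blockRel_symm (hA : Std.Symm CA) (hB : Std.Symm CB) : Std.Symm (blockRel CA CB) :=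
  ⟨by rintro (i | i) (j | j) h <;> first | exact hA.symm _ _ h | exact hB.symm _ _ h | trivial⟩

lemma ncard_setOf_blockRel_inl [Finite A] [Finite B] (i : A) :
    {y | blockRel CA CB (.inl i) y}.ncard = {j | CA i j}.ncard + Nat.card B := by
  have : {y | blockRel CA CB (.inl i) y} = Sum.inl '' {j | CA i j} ∪ Set.range Sum.inr := by
    ext (j | j) <;> simp [blockRel]
  rw [this, Set.ncard_union_eq (by simp [Set.disjoint_left]),
    Set.ncard_image_of_injective _ Sum.inl_injective,
    Set.ncard_range_of_injective Sum.inr_injective]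

lemma ncard_setOf_blockRel_inr [Finite A] [Finite B] (i : B) :
    {y | blockRel CA CB (.inr i) y}.ncard = Nat.card A + {j | CB i j}.ncard := by
  have : {y | blockRel CA CB (.inr i) y} = Set.range Sum.inl ∪ Sum.inr '' {j | CB i j} := by
    ext (j | j) <;> simp [blockRel]
  rw [this, Set.ncard_union_eq (by simp [Set.disjoint_left]),
    Set.ncard_image_of_injective _ Sum.inr_injective,
    Set.ncard_range_of_injective Sum.inl_injective]

lemma ncard_setOf_not [Finite A] (S : A → Prop) :
    {i | ¬ S i}.ncard = Nat.card A - {i | S i}.ncard :=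
  Set.ncard_compl {i | S i}

lemma not_blockRel_compl {u v : A ⊕ B} (huv : u.isLeft ↔ v.isLeft) (h : blockRel CA CB u v) :
    ¬ blockRel (fun i j => ¬ CA i j) (fun i j => ¬ CB i j) u v := by
  rcases u with i | i <;> rcases v with j | j <;> simp_all [blockRel]

lemma minDeg_bipartiteOfRel_blockRel {α : Type*} [Finite A] [Finite B] [Nonempty B]
    (e : α ≃ A ⊕ B) (hA : Std.Symm CA) (hB : Std.Symm CB) {a b d : ℕ}
    (rowA : ∀ i, {j | CA i j}.ncard = a) (rowB : ∀ i, {j | CB i j}.ncard = b)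
    (hd : d ≤ a + Nat.card B) (hd' : Nat.card A + b = d) :
    minDeg (bipartiteOfRel fun x y => blockRel CA CB (e x) (e y)) = d := by
  have hrow : ∀ x, {y | blockRel CA CB (e x) (e y)}.ncard = {w | blockRel CA CB (e x) w}.ncard :=
    fun x => Set.ncard_preimage_of_injective_subset_range (s := {w | blockRel CA CB (e x) w})
      e.injective fun w _ => e.surjective w
  refine minDeg_bipartiteOfRel ((blockRel_symm hA hB).comp e)
    (fun x => ?_) ⟨e.symm (.inr (Classical.arbitrary B)), ?_⟩
  · rw [hrow]
    rcases e x with i | i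
    · rwa [ncard_setOf_blockRel_inl, rowA]
    · rw [ncard_setOf_blockRel_inr, rowB, hd']
  · rw [hrow, apply_symm_apply, ncard_setOf_blockRel_inr, rowB, hd']

end BlockRel

end FriendsAndStrangers

open FriendsAndStrangers in
theorem statement6 (r δ₁ δ₂ : ℕ) (hr : 2 ≤ r)
    (hsum : δ₁ + δ₂ = 3 * r / 2) (h1 : δ₁ ≤ r) (h2 : δ₂ ≤ r) :
    ∃ X Y : SimpleGraph (Fin r ⊕ Fin r),
      X ≤ completeBipartiteGraph (Fin r) (Fin r) ∧
      Y ≤ completeBipartiteGraph (Fin r) (Fin r) ∧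
      minDeg X = δ₁ ∧ minDeg Y = δ₂ ∧
      2 < Nat.card (FS X Y).ConnectedComponent := by
  set m := r / 2
  set k := r - m
  set c := r - δ₂
  have : Nonempty (Fin k) := ⟨⟨0, by omega⟩⟩
  have : Nontrivial (Fin r) := Fin.nontrivial_iff_two_le.mpr hr
  let e : Fin r ≃ Fin m ⊕ Fin k := (finCongr (by omega)).trans finSumFinEquiv.symm
  obtain ⟨CA, hCA, rowA⟩ := exists_symm_ncard_setOf_eq (min_le_right c m)
  obtain ⟨CB, hCB, rowB⟩ := exists_symm_ncard_setOf_eq (show c ≤ k by omega)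
  refine ⟨bipartiteOfRel fun x y => blockRel CA CB (e x) (e y),
    bipartiteOfRel fun x y => blockRel (fun i j => ¬ CA i j) (fun i j => ¬ CB i j) (e x) (e y),
    bipartiteOfRel_le_completeBipartiteGraph, bipartiteOfRel_le_completeBipartiteGraph,
    ?_, ?_, ?_⟩
  · exact minDeg_bipartiteOfRel_blockRel e hCA hCB rowA rowB
      (by rw [Nat.card_fin]; omega) (by rw [Nat.card_fin]; omega)
  · exact minDeg_bipartiteOfRel_blockRel e hCA.not hCB.not (a := m - min c m) (b := k - c)
      (fun i => by rw [ncard_setOf_not, rowA, Nat.card_fin])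
      (fun i => by rw [ncard_setOf_not, rowB, Nat.card_fin])
      (by rw [Nat.card_fin]; omega) (by rw [Nat.card_fin]; omega)
  · exact two_lt_card_connectedComponent_FS (fun x => (e x).isLeft)
      ((blockRel_symm hCA.not hCB.not).comp e)
      fun x y hxy => not_blockRel_compl (by simpa using hxy)
end

section
/- Let r ≥ 2 and let X be an edge-subgraph of K_{r,r} such that 2·δ(X) ≥ r + 2 (i.e., δ(X) ≥ r/2 + 1). Then the friends-and-strangers graph FS(X, K_{r,r}) has exactly two connected components. -/
open SimpleGraph

/-!
A move of `FS X K_{r,r}` multiplies `σ` on the right by a transposition along an edge of `X`;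
the endpoints of that edge lie on opposite sides and so must their images. The move flips the
sign of `σ` and changes by one the number of left vertices that `σ` sends to the right, so
`sign σ · (-1) ^ #(left mismatches)` is constant on components. It separates the identity from
a transposition of two left vertices.

Conversely, `δ(X) ≥ r/2 + 1` gives any two vertices on the same side two common neighbours.
Fixing mismatched pairs one at a time (with at most three moves each) connects every `σ` to a
side-preserving bijection. Relabelling by an automorphism of `K_{r,r}` is an automorphism of
the friends-and-strangers graph, so the side-preserving bijections in the component of the
identity form a group. It contains every 3-cycle within a side (six moves around a common
neighbour, or a conjugate of two such 3-cycles) and a double transposition across the sides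
(four moves around a 4-cycle of `X`), hence every even side-preserving bijection.
-/

open Equiv Equiv.Perm

theorem SimpleGraph.card_connectedComponent_eq_two {V : Type*} {G : SimpleGraph V} {p q : V}
    (hpq : ¬ G.Reachable p q) (h : ∀ v, G.Reachable v p ∨ G.Reachable v q) :
    Nat.card G.ConnectedComponent = 2 := by
  rw [Nat.card_eq_two_iff]
  refine ⟨G.connectedComponentMk p, G.connectedComponentMk q,
    fun h' => hpq (ConnectedComponent.eq.1 h'), Set.eq_univ_of_forall fun c => c.ind fun v => ?_⟩
  rcases h v with h | h <;> simp [ConnectedComponent.eq, h]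

theorem completeBipartiteGraph_adj_iff_isLeft_ne {α β : Type*} {v w : α ⊕ β} :
    (completeBipartiteGraph α β).Adj v w ↔ v.isLeft ≠ w.isLeft := by
  cases v <;> cases w <;> simp

theorem completeBipartiteGraph_adj_apply_iff {α β : Type*} {ρ : Perm (α ⊕ β)}
    (hρ : ∀ x, (ρ x).isLeft = x.isLeft) {v w : α ⊕ β} :
    (completeBipartiteGraph α β).Adj (ρ v) (ρ w) ↔
      (completeBipartiteGraph α β).Adj v w := by
  simp only [completeBipartiteGraph_adj_iff_isLeft_ne, hρ]

theorem Equiv.isLeft_swap_apply {α β : Type*} [DecidableEq α] [DecidableEq β] {u v : α ⊕ β}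
    (h : u.isLeft = v.isLeft) (x : α ⊕ β) : (swap u v x).isLeft = x.isLeft := by
  rw [swap_apply_def]
  split_ifs <;> simp_all

theorem Equiv.Perm.alternatingGroup_le_of_swap_mul_swap_mem {γ : Type*} [Fintype γ]
    [DecidableEq γ] {K : Subgroup (Perm γ)}
    (h : ∀ u v w : γ, u ≠ v → u ≠ w → v ≠ w → swap u v * swap v w ∈ K) :
    alternatingGroup γ ≤ K := by
  rw [← closure_three_cycles_eq_alternating, Subgroup.closure_le]
  intro g hg
  obtain ⟨a, ha⟩ : g.support.Nonempty := Finset.card_pos.1 (by rw [hg.card_support]; norm_num)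
  have hnodup := hg.nodup_iff_mem_support.2 ha
  rw [hg.eq_swap_mul_swap_iff_mem_support.2 ha]
  simp only [List.nodup_cons, List.mem_cons, List.not_mem_nil] at hnodup
  exact h _ _ _ (by tauto) (by tauto) (by tauto)

namespace FS

section General

variable {α : Type*} {X Y : SimpleGraph α}

theorem adj_mul_swap [DecidableEq α] {σ : Perm α} {a b : α} (hab : X.Adj a b)
    (hY : Y.Adj (σ a) (σ b)) : (FS X Y).Adj σ (σ * swap a b) :=
  ⟨a, b, hab, hY, by simp, by simp, fun w hwa hwb => by simp [swap_apply_of_ne_of_ne hwa hwb]⟩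

theorem eq_mul_swap_of_adj [DecidableEq α] {σ τ : Perm α} (h : (FS X Y).Adj σ τ) :
    ∃ a b, X.Adj a b ∧ Y.Adj (σ a) (σ b) ∧ τ = σ * swap a b := by
  obtain ⟨a, b, hab, hY, ha, hb, hw⟩ := h
  refine ⟨a, b, hab, hY, Equiv.ext fun w => ?_⟩
  rw [Perm.mul_apply, swap_apply_def]
  split_ifs with h1 h2
  · rwa [h1]
  · rwa [h2]
  · exact hw w h1 h2

theorem reachable_mul_swap [DecidableEq α] {σ π : Perm α} {a b : α}
    (h : (FS X Y).Reachable σ π) (hab : X.Adj a b) (hY : Y.Adj (π a) (π b)) :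
    (FS X Y).Reachable σ (π * swap a b) :=
  h.trans (adj_mul_swap hab hY).reachable

def mulLeftHom (ρ : Perm α) (hρ : ∀ x y, Y.Adj x y → Y.Adj (ρ x) (ρ y)) :
    FS X Y →g FS X Y where
  toFun σ := ρ * σ
  map_rel' := by
    rintro σ τ ⟨a, b, hab, hY, ha, hb, hw⟩
    exact ⟨a, b, hab, hρ _ _ hY, by simp [ha], by simp [hb],
      fun w h1 h2 => by simp [hw w h1 h2]⟩

theorem reachable_mul_left {σ τ : Perm α} (h : (FS X Y).Reachable σ τ) (ρ : Perm α)
    (hρ : ∀ x y, Y.Adj x y → Y.Adj (ρ x) (ρ y)) : (FS X Y).Reachable (ρ * σ) (ρ * τ) :=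
  h.map (mulLeftHom ρ hρ)

def reachableAut (X Y : SimpleGraph α) : Subgroup (Perm α) where
  carrier := {ρ | (∀ x y, Y.Adj (ρ x) (ρ y) ↔ Y.Adj x y) ∧ (FS X Y).Reachable 1 ρ}
  one_mem' := ⟨fun _ _ => Iff.rfl, .rfl⟩
  mul_mem' := by
    rintro ρ π ⟨hρ, h1ρ⟩ ⟨hπ, h1π⟩
    refine ⟨fun x y => (hρ _ _).trans (hπ x y), h1ρ.trans ?_⟩
    simpa using reachable_mul_left h1π ρ fun x y => (hρ x y).2
  inv_mem' := by
    rintro ρ ⟨hρ, h1ρ⟩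
    have hρ' : ∀ x y, Y.Adj (ρ⁻¹ x) (ρ⁻¹ y) ↔ Y.Adj x y := fun x y => by
      simpa using (hρ (ρ⁻¹ x) (ρ⁻¹ y)).symm
    refine ⟨hρ', ?_⟩
    simpa using (reachable_mul_left h1ρ ρ⁻¹ fun x y => (hρ' x y).2).symm

end General

variable {α β : Type*} {X : SimpleGraph (α ⊕ β)}

theorem isLeft_ne_of_adj (hX : X ≤ completeBipartiteGraph α β) {v w : α ⊕ β}
    (h : X.Adj v w) : v.isLeft ≠ w.isLeft :=
  completeBipartiteGraph_adj_iff_isLeft_ne.1 (hX h)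

theorem exists_eq_inl_of_adj_inr (hX : X ≤ completeBipartiteGraph α β) {j : β} {a : α ⊕ β}
    (h : X.Adj (.inr j) a) : ∃ i, a = .inl i := by
  cases a with
  | inl i => exact ⟨i, rfl⟩
  | inr _ => exact absurd (isLeft_ne_of_adj hX h) (by simp)

theorem exists_eq_inr_of_adj_inl (hX : X ≤ completeBipartiteGraph α β) {i : α} {b : α ⊕ β}
    (h : X.Adj (.inl i) b) : ∃ j, b = .inr j := by
  cases b with
  | inl _ => exact absurd (isLeft_ne_of_adj hX h) (by simp)
  | inr j => exact ⟨j, rfl⟩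

theorem mem_reachableAut_of_isLeft {ρ : Perm (α ⊕ β)} (hρ : ∀ x, (ρ x).isLeft = x.isLeft)
    (h : (FS X (completeBipartiteGraph α β)).Reachable 1 ρ) :
    ρ ∈ reachableAut X (completeBipartiteGraph α β) :=
  ⟨fun _ _ => completeBipartiteGraph_adj_apply_iff hρ, h⟩

def SameSideTwoCommonNeighbors (X : SimpleGraph (α ⊕ β)) : Prop :=
  ∀ ⦃u v : α ⊕ β⦄, u ≠ v → u.isLeft = v.isLeft → 1 < (X.commonNeighbors u v).ncard

theorem exists_common_neighbor_ne (hX2 : SameSideTwoCommonNeighbors X) {u v : α ⊕ β}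
    (huv : u ≠ v) (hs : u.isLeft = v.isLeft) (x : α ⊕ β) :
    ∃ c, c ≠ x ∧ X.Adj u c ∧ X.Adj v c := by
  obtain ⟨c, hc, hcx⟩ := Set.exists_ne_of_one_lt_ncard (hX2 huv hs) x
  exact ⟨c, hcx, X.mem_commonNeighbors.1 hc⟩

theorem exists_adj_inr [Nontrivial β] (hX2 : SameSideTwoCommonNeighbors X) (j : β) :
    ∃ a, X.Adj (.inr j) a := by
  obtain ⟨j', hj'⟩ := exists_ne j
  obtain ⟨a, -, hja, -⟩ := exists_common_neighbor_ne hX2 (u := .inr j) (v := .inr j')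
    (by simpa using hj'.symm) rfl (.inr j)
  exact ⟨a, hja⟩

section Moves

variable [DecidableEq α] [DecidableEq β]

theorem reachable_mul_swap_of_isLeft_ne {σ π : Perm (α ⊕ β)} {a b : α ⊕ β}
    (h : (FS X (completeBipartiteGraph α β)).Reachable σ π) (hab : X.Adj a b)
    (hπ : (π a).isLeft ≠ (π b).isLeft) :
    (FS X (completeBipartiteGraph α β)).Reachable σ (π * swap a b) :=
  reachable_mul_swap h hab (completeBipartiteGraph_adj_iff_isLeft_ne.2 hπ)

theorem swap_mul_swap_mem_reachableAut_of_square (hX : X ≤ completeBipartiteGraph α β)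
    {u v c c' : α ⊕ β} (huv : u ≠ v) (hcc' : c ≠ c') (huc : X.Adj u c) (huc' : X.Adj u c')
    (hvc : X.Adj v c) (hvc' : X.Adj v c') :
    swap u v * swap c c' ∈ reachableAut X (completeBipartiteGraph α β) := by
  have := isLeft_ne_of_adj hX huc
  have := isLeft_ne_of_adj hX huc'
  have := isLeft_ne_of_adj hX hvc
  have := isLeft_ne_of_adj hX hvc'
  refine mem_reachableAut_of_isLeft (fun x => ?_) ?_
  · rw [Perm.mul_apply, isLeft_swap_apply (by grind), isLeft_swap_apply (by grind)]
  have key : swap u v * swap c c' = 1 * swap u c * swap v c' * swap u c' * swap v c := by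
    ext x
    simp only [Perm.mul_apply, swap_apply_def, Perm.one_apply]
    grind
  rw [key]
  refine reachable_mul_swap_of_isLeft_ne (reachable_mul_swap_of_isLeft_ne
    (reachable_mul_swap_of_isLeft_ne (reachable_mul_swap_of_isLeft_ne .rfl huc ?_) hvc' ?_) huc' ?_)
    hvc ?_ <;> simp only [Perm.mul_apply, Perm.one_apply, swap_apply_def] <;> grind

theorem swap_mul_swap_mem_reachableAut_of_adj (hX : X ≤ completeBipartiteGraph α β)
    {u v w b c : α ⊕ β} (huv : u ≠ v) (huw : u ≠ w) (hvw : v ≠ w) (hbc : b ≠ c)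
    (huc : X.Adj u c) (hvc : X.Adj v c) (hwc : X.Adj w c) (hub : X.Adj u b) (hwb : X.Adj w b) :
    swap u v * swap v w ∈ reachableAut X (completeBipartiteGraph α β) := by
  have := isLeft_ne_of_adj hX huc
  have := isLeft_ne_of_adj hX hvc
  have := isLeft_ne_of_adj hX hwc
  have := isLeft_ne_of_adj hX hub
  have := isLeft_ne_of_adj hX hwb
  refine mem_reachableAut_of_isLeft (fun x => ?_) ?_
  · rw [Perm.mul_apply, isLeft_swap_apply (by grind), isLeft_swap_apply (by grind)]
  have key : swap u v * swap v w =
      1 * swap u b * swap v c * swap u c * swap w c * swap v c * swap w b := by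
    ext x
    simp only [Perm.mul_apply, swap_apply_def, Perm.one_apply]
    grind
  rw [key]
  refine reachable_mul_swap_of_isLeft_ne (reachable_mul_swap_of_isLeft_ne
    (reachable_mul_swap_of_isLeft_ne (reachable_mul_swap_of_isLeft_ne
    (reachable_mul_swap_of_isLeft_ne (reachable_mul_swap_of_isLeft_ne .rfl hub ?_)
    hvc ?_) huc ?_) hwc ?_) hvc ?_) hwb ?_ <;>
    simp only [Perm.mul_apply, Perm.one_apply, swap_apply_def] <;> grind

theorem swap_mul_swap_mem_reachableAut_of_common_neighbor (hX : X ≤ completeBipartiteGraph α β)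
    (hX2 : SameSideTwoCommonNeighbors X) {u v w c : α ⊕ β} (huv : u ≠ v) (huw : u ≠ w)
    (hvw : v ≠ w) (huc : X.Adj u c) (hvc : X.Adj v c) (hwc : X.Adj w c) :
    swap u v * swap v w ∈ reachableAut X (completeBipartiteGraph α β) := by
  obtain ⟨b, hbc, hub, hwb⟩ := exists_common_neighbor_ne hX2 huw
    (by grind [isLeft_ne_of_adj hX huc, isLeft_ne_of_adj hX hwc]) c
  exact swap_mul_swap_mem_reachableAut_of_adj hX huv huw hvw hbc huc hvc hwc hub hwb

theorem swap_mul_swap_mem_reachableAut (hX : X ≤ completeBipartiteGraph α β)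
    (hX2 : SameSideTwoCommonNeighbors X) {u v w : α ⊕ β} (huv : u ≠ v) (huw : u ≠ w)
    (hvw : v ≠ w) (hv : u.isLeft = v.isLeft) (hw : u.isLeft = w.isLeft) :
    swap u v * swap v w ∈ reachableAut X (completeBipartiteGraph α β) := by
  by_cases h : ∃ c, X.Adj u c ∧ X.Adj v c ∧ X.Adj w c
  · obtain ⟨c, huc, hvc, hwc⟩ := h
    exact swap_mul_swap_mem_reachableAut_of_common_neighbor hX hX2 huv huw hvw huc hvc hwc
  push Not at h
  obtain ⟨c, -, huc, hvc⟩ := exists_common_neighbor_ne hX2 huv hv u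
  obtain ⟨d, -, hud, hwd⟩ := exists_common_neighbor_ne hX2 huw hw u
  have hcd : c ≠ d := by rintro rfl; exact h c huc hvc hwd
  obtain ⟨t, htu, hct, hdt⟩ := exists_common_neighbor_ne hX2 hcd
    (by grind [isLeft_ne_of_adj hX huc, isLeft_ne_of_adj hX hud]) u
  have htv : t ≠ v := by rintro rfl; exact h d hud hdt.symm hwd
  have htw : t ≠ w := by rintro rfl; exact h c huc hvc hct.symm
  have g := swap_mul_swap_mem_reachableAut_of_common_neighbor hX hX2 huv htu.symm htv.symm
    huc hvc hct.symm
  have g' := swap_mul_swap_mem_reachableAut_of_common_neighbor hX hX2 huw htu.symm htw.symm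
    hud hwd hdt.symm
  -- conjugating the 3-cycle `(u w t)` by the 3-cycle `(u v t)` gives `(u v w)`
  have key : swap u v * swap v w =
      (swap u v * swap v t) * (swap u w * swap w t) * (swap u v * swap v t)⁻¹ := by
    rw [mul_inv_rev, swap_inv, swap_inv]
    ext x
    simp only [Perm.mul_apply, swap_apply_def]
    grind
  rw [key]
  exact Subgroup.mul_mem _ (Subgroup.mul_mem _ g g') (Subgroup.inv_mem _ g)

theorem sumCongr_left_mem_reachableAut [Fintype α] (hX : X ≤ completeBipartiteGraph α β)
    (hX2 : SameSideTwoCommonNeighbors X) {a : Perm α} (ha : sign a = 1) :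
    Perm.sumCongr a (1 : Perm β) ∈ reachableAut X (completeBipartiteGraph α β) :=
  alternatingGroup_le_of_swap_mul_swap_mem
    (K := (reachableAut X _).comap ((sumCongrHom α β).comp (.inl _ _)))
    (fun u v w huv huw hvw => by
      rw [Subgroup.mem_comap, map_mul]
      simpa using swap_mul_swap_mem_reachableAut hX hX2 (u := .inl u) (v := .inl v)
        (w := .inl w) (by simpa) (by simpa) (by simpa) rfl rfl)
    (mem_alternatingGroup.2 ha)

theorem sumCongr_right_mem_reachableAut [Fintype β] (hX : X ≤ completeBipartiteGraph α β)
    (hX2 : SameSideTwoCommonNeighbors X) {b : Perm β} (hb : sign b = 1) :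
    Perm.sumCongr (1 : Perm α) b ∈ reachableAut X (completeBipartiteGraph α β) :=
  alternatingGroup_le_of_swap_mul_swap_mem
    (K := (reachableAut X _).comap ((sumCongrHom α β).comp (.inr _ _)))
    (fun u v w huv huw hvw => by
      rw [Subgroup.mem_comap, map_mul]
      simpa using swap_mul_swap_mem_reachableAut hX hX2 (u := .inr u) (v := .inr v)
        (w := .inr w) (by simpa) (by simpa) (by simpa) rfl rfl)
    (mem_alternatingGroup.2 hb)

theorem exists_sumCongr_swap_swap_mem_reachableAut (hX : X ≤ completeBipartiteGraph α β)
    (hX2 : SameSideTwoCommonNeighbors X) {x y : α} (hxy : x ≠ y) :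
    ∃ j j' : β, j ≠ j' ∧
      Perm.sumCongr (swap x y) (swap j j') ∈ reachableAut X (completeBipartiteGraph α β) := by
  have hxy' : (.inl x : α ⊕ β) ≠ .inl y := by simpa
  obtain ⟨c, -, hxc, hyc⟩ := exists_common_neighbor_ne hX2 hxy' rfl (.inl x)
  obtain ⟨c', hc'c, hxc', hyc'⟩ := exists_common_neighbor_ne hX2 hxy' rfl c
  obtain ⟨j, rfl⟩ := exists_eq_inr_of_adj_inl hX hxc
  obtain ⟨j', rfl⟩ := exists_eq_inr_of_adj_inl hX hxc'
  refine ⟨j, j', by simpa using hc'c.symm, ?_⟩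
  rw [← mul_one (swap x y), ← one_mul (swap j j'), ← sumCongr_mul]
  simpa using swap_mul_swap_mem_reachableAut_of_square hX hxy' hc'c.symm hxc hxc' hyc hyc'

end Moves

section LeftMismatches

open Finset

variable [Fintype α]

def leftMismatches (σ : Perm (α ⊕ β)) : Finset α := {i | (σ (.inl i)).isLeft = false}

theorem mem_leftMismatches {σ : Perm (α ⊕ β)} {i : α} :
    i ∈ leftMismatches σ ↔ (σ (.inl i)).isLeft = false := by
  simp [leftMismatches]

theorem leftMismatches_mul_swap [DecidableEq α] [DecidableEq β] (σ : Perm (α ⊕ β)) (i : α)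
    (j : β) :
    leftMismatches (σ * swap (.inl i) (.inr j)) =
      if (σ (.inr j)).isLeft then (leftMismatches σ).erase i
      else insert i (leftMismatches σ) := by
  ext k
  rcases eq_or_ne k i with rfl | hki
  · split_ifs with h <;> simp [mem_leftMismatches, h]
  · split_ifs <;> simp [mem_leftMismatches, hki, swap_apply_of_ne_of_ne]

theorem leftMismatches_eq_empty_iff {σ : Perm (α ⊕ β)} :
    leftMismatches σ = ∅ ↔ Set.MapsTo σ (Set.range .inl) (Set.range .inl) := by
  simp [Finset.eq_empty_iff_forall_notMem, mem_leftMismatches, Set.MapsTo, Set.range_inl]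

theorem exists_isLeft_apply_inr [Finite β] {σ : Perm (α ⊕ β)}
    (h : leftMismatches σ ≠ ∅) : ∃ j, (σ (.inr j)).isLeft := by
  rw [Ne, leftMismatches_eq_empty_iff, perm_mapsTo_inl_iff_mapsTo_inr] at h
  simpa [Set.MapsTo, Set.range_inr] using h

theorem exists_reachable_card_leftMismatches_lt_of_adj [DecidableEq α] [DecidableEq β]
    {σ : Perm (α ⊕ β)} {i : α} {j : β}
    (hi : i ∈ leftMismatches σ) (hj : (σ (.inr j)).isLeft) (hij : X.Adj (.inl i) (.inr j)) :
    ∃ τ, (FS X (completeBipartiteGraph α β)).Reachable σ τ ∧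
      #(leftMismatches τ) < #(leftMismatches σ) := by
  refine ⟨σ * swap (.inl i) (.inr j),
    reachable_mul_swap_of_isLeft_ne .rfl hij (by simp [mem_leftMismatches.1 hi, hj]), ?_⟩
  rw [leftMismatches_mul_swap, if_pos hj]
  exact card_erase_lt_of_mem hi

end LeftMismatches

section Components

open Finset

variable [DecidableEq α] [DecidableEq β] [Fintype α] [Fintype β]

theorem sumCongr_mem_reachableAut (hX : X ≤ completeBipartiteGraph α β)
    (hX2 : SameSideTwoCommonNeighbors X) {x y : α} (hxy : x ≠ y) {a : Perm α} {b : Perm β}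
    (hab : sign a = sign b) :
    Perm.sumCongr a b ∈ reachableAut X (completeBipartiteGraph α β) := by
  set H := reachableAut X (completeBipartiteGraph α β)
  rcases Int.units_eq_one_or (sign a) with ha | ha
  · rw [← mul_one a, ← one_mul b, ← sumCongr_mul]
    exact H.mul_mem (sumCongr_left_mem_reachableAut hX hX2 ha)
      (sumCongr_right_mem_reachableAut hX hX2 (hab ▸ ha))
  obtain ⟨j, j', hjj', hm⟩ := exists_sumCongr_swap_swap_mem_reachableAut hX hX2 hxy
  have : Perm.sumCongr a b = Perm.sumCongr (a * swap x y) 1 * Perm.sumCongr 1 (b * swap j j') *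
      Perm.sumCongr (swap x y) (swap j j') := by simp [sumCongr_mul, mul_assoc]
  rw [this]
  refine H.mul_mem (H.mul_mem (sumCongr_left_mem_reachableAut hX hX2 ?_)
    (sumCongr_right_mem_reachableAut hX hX2 ?_)) hm
  · simp [sign_swap hxy, ha]
  · simp [sign_swap hjj', ← hab, ha]

def twistedSign (σ : Perm (α ⊕ β)) : ℤˣ := sign σ * (-1) ^ #(leftMismatches σ)

theorem twistedSign_mul_swap {σ : Perm (α ⊕ β)} {i : α} {j : β}
    (h : (σ (.inl i)).isLeft ≠ (σ (.inr j)).isLeft) :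
    twistedSign (σ * swap (.inl i) (.inr j)) = twistedSign σ := by
  unfold twistedSign
  rw [Perm.sign_mul, sign_swap (by simp), leftMismatches_mul_swap]
  split_ifs with hj
  · have hi : i ∈ leftMismatches σ := mem_leftMismatches.2 (by simpa [hj] using h)
    rw [← card_erase_add_one hi, pow_succ]
    simp
  · have hi : i ∉ leftMismatches σ := by simpa [mem_leftMismatches, hj] using h
    rw [card_insert_of_notMem hi, pow_succ]
    simp

theorem twistedSign_eq_of_adj (hX : X ≤ completeBipartiteGraph α β) {σ τ : Perm (α ⊕ β)}
    (h : (FS X (completeBipartiteGraph α β)).Adj σ τ) : twistedSign τ = twistedSign σ := by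
  obtain ⟨a, b, hab, hY, rfl⟩ := eq_mul_swap_of_adj h
  rw [completeBipartiteGraph_adj_iff_isLeft_ne] at hY
  have hab' := isLeft_ne_of_adj hX hab
  cases a <;> cases b
  · simp at hab'
  · exact twistedSign_mul_swap hY
  · rw [swap_comm]
    exact twistedSign_mul_swap hY.symm
  · simp at hab'

theorem twistedSign_eq_of_reachable (hX : X ≤ completeBipartiteGraph α β)
    {σ τ : Perm (α ⊕ β)} (h : (FS X (completeBipartiteGraph α β)).Reachable σ τ) :
    twistedSign σ = twistedSign τ := by
  obtain ⟨p⟩ := h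
  induction p with
  | nil => rfl
  | cons h _ ih => exact (twistedSign_eq_of_adj hX h).symm.trans ih

theorem twistedSign_one : twistedSign (1 : Perm (α ⊕ β)) = 1 := by
  simp [twistedSign, leftMismatches]

theorem twistedSign_swap_inl {x y : α} (hxy : x ≠ y) :
    twistedSign (swap (.inl x) (.inl y) : Perm (α ⊕ β)) = -1 := by
  have : leftMismatches (swap (.inl x) (.inl y) : Perm (α ⊕ β)) = ∅ := by
    ext i
    simp only [mem_leftMismatches, swap_apply_def]
    split_ifs <;> simp
  simp [twistedSign, this, hxy]

theorem not_reachable_one_swap_inl (hX : X ≤ completeBipartiteGraph α β) {x y : α}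
    (hxy : x ≠ y) :
    ¬ (FS X (completeBipartiteGraph α β)).Reachable 1 (swap (.inl x) (.inl y)) :=
  fun h => by
    have := twistedSign_eq_of_reachable hX h
    rw [twistedSign_one, twistedSign_swap_inl hxy] at this
    exact absurd this (by decide)

theorem exists_reachable_card_leftMismatches_lt [Nontrivial β]
    (hX : X ≤ completeBipartiteGraph α β) (hX2 : SameSideTwoCommonNeighbors X)
    {σ : Perm (α ⊕ β)} (hσ : leftMismatches σ ≠ ∅) :
    ∃ τ, (FS X (completeBipartiteGraph α β)).Reachable σ τ ∧
      #(leftMismatches τ) < #(leftMismatches σ) := by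
  obtain ⟨i, hi⟩ := nonempty_of_ne_empty hσ
  obtain ⟨j, hj⟩ := exists_isLeft_apply_inr hσ
  by_cases hij : X.Adj (.inl i) (.inr j)
  · exact exists_reachable_card_leftMismatches_lt_of_adj hi hj hij
  obtain ⟨a, hja⟩ := exists_adj_inr hX2 j
  obtain ⟨k, rfl⟩ := exists_eq_inl_of_adj_inr hX hja
  by_cases hk : k ∈ leftMismatches σ
  · exact exists_reachable_card_leftMismatches_lt_of_adj hk hj hja.symm
  have hik : i ≠ k := by rintro rfl; exact hij hja.symm
  obtain ⟨b, hbj, hib, hkb⟩ := exists_common_neighbor_ne hX2 (u := .inl i) (v := .inl k)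
    (by simpa using hik) rfl (.inr j)
  obtain ⟨l, rfl⟩ := exists_eq_inr_of_adj_inl hX hib
  cases hl : (σ (.inr l)).isLeft
  case true => exact exists_reachable_card_leftMismatches_lt_of_adj hi hl hib
  -- `σ` keeps `inl k` and `inr l` on their sides; once they are swapped, `(inl i, inr l)` and
  -- then `(inl k, inr j)` are edges both of whose endpoints are sent to the wrong side
  have hjl : j ≠ l := by rintro rfl; exact hbj rfl
  have hk' : (σ (.inl k)).isLeft := by simpa [mem_leftMismatches] using hk
  have hL : leftMismatches (σ * swap (.inl k) (.inr l) * swap (.inl i) (.inr l) *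
      swap (.inl k) (.inr j)) = (leftMismatches σ).erase i := by
    simp only [leftMismatches_mul_swap]
    simp [swap_apply_of_ne_of_ne, hjl, hl, hj, hk']
    rw [erase_right_comm, erase_insert hk]
  refine ⟨σ * swap (.inl k) (.inr l) * swap (.inl i) (.inr l) * swap (.inl k) (.inr j), ?_, ?_⟩
  · refine reachable_mul_swap_of_isLeft_ne (reachable_mul_swap_of_isLeft_ne
      (reachable_mul_swap_of_isLeft_ne .rfl hkb ?_) hib ?_) hja.symm ?_ <;>
      simp [swap_apply_of_ne_of_ne, hik, hik.symm, hjl, mem_leftMismatches.1 hi, hj, hk', hl]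
  · rw [hL]
    exact card_erase_lt_of_mem hi

theorem exists_reachable_mem_range_sumCongrHom [Nontrivial β]
    (hX : X ≤ completeBipartiteGraph α β) (hX2 : SameSideTwoCommonNeighbors X)
    (σ : Perm (α ⊕ β)) :
    ∃ τ ∈ (sumCongrHom α β).range,
      (FS X (completeBipartiteGraph α β)).Reachable σ τ := by
  induction hn : #(leftMismatches σ) using Nat.strong_induction_on generalizing σ with
  | _ n ih =>
  by_cases hσ : leftMismatches σ = ∅
  · exact ⟨σ, mem_sumCongrHom_range_of_perm_mapsTo_inl (leftMismatches_eq_empty_iff.1 hσ),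
      .rfl⟩
  obtain ⟨τ, hστ, hlt⟩ := exists_reachable_card_leftMismatches_lt hX hX2 hσ
  obtain ⟨ρ, hρ, hτρ⟩ := ih _ (hn ▸ hlt) τ rfl
  exact ⟨ρ, hρ, hστ.trans hτρ⟩

theorem reachable_one_or_reachable_swap_inl [Nontrivial β]
    (hX : X ≤ completeBipartiteGraph α β) (hX2 : SameSideTwoCommonNeighbors X)
    {x y : α} (hxy : x ≠ y) (σ : Perm (α ⊕ β)) :
    (FS X (completeBipartiteGraph α β)).Reachable σ 1 ∨
      (FS X (completeBipartiteGraph α β)).Reachable σ (swap (.inl x) (.inl y)) := by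
  obtain ⟨_, ⟨⟨a, b⟩, rfl⟩, hσ⟩ := exists_reachable_mem_range_sumCongrHom hX hX2 σ
  simp only [sumCongrHom_apply] at hσ
  by_cases hab : sign a = sign b
  · exact .inl (hσ.trans (sumCongr_mem_reachableAut hX hX2 hxy hab).2.symm)
  right
  have hab' : sign (swap x y * a) = sign b := by
    rw [Perm.sign_mul, sign_swap hxy, Int.units_ne_iff_eq_neg.1 hab]
    simp
  have h := reachable_mul_left (sumCongr_mem_reachableAut hX hX2 hxy hab').2
    (swap (.inl x) (.inl y)) fun _ _ => (completeBipartiteGraph_adj_apply_iff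
      (isLeft_swap_apply (u := .inl x) (v := .inl y) rfl)).2
  have hρ : swap (.inl x) (.inl y) * Perm.sumCongr (swap x y * a) b = Perm.sumCongr a b := by
    rw [← sumCongr_swap_one, sumCongr_mul, ← mul_assoc, swap_mul_self, one_mul, one_mul]
  rw [mul_one, hρ] at h
  exact hσ.trans h.symm

theorem card_connectedComponent_completeBipartiteGraph_eq_two [Nontrivial α] [Nontrivial β]
    (hX : X ≤ completeBipartiteGraph α β) (hX2 : SameSideTwoCommonNeighbors X) :
    Nat.card (FS X (completeBipartiteGraph α β)).ConnectedComponent = 2 := by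
  obtain ⟨x, y, hxy⟩ := exists_pair_ne α
  exact card_connectedComponent_eq_two (not_reachable_one_swap_inl hX hxy)
    (reachable_one_or_reachable_swap_inl hX hX2 hxy)

end Components

theorem sameSideTwoCommonNeighbors_of_minDeg {γ : Type*} [Finite γ] {X : SimpleGraph (γ ⊕ γ)}
    (hX : X ≤ completeBipartiteGraph γ γ) (hdeg : Nat.card γ + 2 ≤ 2 * minDeg X) :
    SameSideTwoCommonNeighbors X := by
  intro u v _ hs
  have hdeg' : ∀ w, minDeg X ≤ (X.neighborSet w).ncard := ciInf_le' _
  have hside : ∀ w ∈ X.neighborSet u ∪ X.neighborSet v, w.isLeft = !u.isLeft := by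
    rintro w (hw | hw) <;> have := isLeft_ne_of_adj hX hw <;> grind
  have hunion : (X.neighborSet u ∪ X.neighborSet v).ncard ≤ Nat.card γ := by
    rw [← Set.ncard_univ]
    refine Set.ncard_le_ncard_of_injOn (Sum.elim id id) (fun _ _ => Set.mem_univ _) ?_
    rintro (a | a) ha (b | b) hb hab <;> have := hside _ ha <;> have := hside _ hb <;> simp_all
  have := Set.ncard_union_add_ncard_inter (X.neighborSet u) (X.neighborSet v)
  have := hdeg' u
  have := hdeg' v
  change 1 < (X.neighborSet u ∩ X.neighborSet v).ncard
  omega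

end FS

theorem statement7 (r : ℕ) (hr : 2 ≤ r)
    (X : SimpleGraph (Fin r ⊕ Fin r))
    (hX : X ≤ completeBipartiteGraph (Fin r) (Fin r))
    (hdeg : 2 * minDeg X ≥ r + 2) :
    Nat.card (FS X (completeBipartiteGraph (Fin r) (Fin r))).ConnectedComponent = 2 := by
  have : Nontrivial (Fin r) := Fin.nontrivial_iff_two_le.2 hr
  exact FS.card_connectedComponent_completeBipartiteGraph_eq_two hX
    (FS.sameSideTwoCommonNeighbors_of_minDeg hX (by simpa using hdeg))
end

section
/- Let r ≥ 2. Then there exists an edge-subgraph X of K_{r,r} with δ(X) = ⌊r/2⌋ such that the friends-and-strangers graph FS(X, K_{r,r}) has more than two connected components. -/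
/-!
Let `L` be the set of vertices of `K_{r,r}` of index `< ⌈r/2⌉`, and let `X` keep only the edges of
`K_{r,r}` that do not cross between `L` and its complement, so `X ≅ K_{⌈r/2⌉,⌈r/2⌉} ⊔ K_{⌊r/2⌋,⌊r/2⌋}`
and `δ(X) = ⌊r/2⌋`. A move of `FS(X, Y)` composes `σ` with a transposition of two `X`-adjacent
vertices, which lie on the same side of `L`; hence the set `σ(L)` is constant on connected
components. The identity and two transpositions exchanging a vertex of `L` with two different
vertices outside `L` give three different sets `σ(L)`, hence three components.
-/
open SimpleGraph

theorem Equiv.image_swap_eq_self {α : Type*} [DecidableEq α] {S : Set α} {a b : α}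
    (h : a ∈ S ↔ b ∈ S) : Equiv.swap a b '' S = S := by
  ext x
  rw [Equiv.image_eq_preimage_symm, Equiv.symm_swap, Set.mem_preimage, Equiv.swap_apply_def]
  split_ifs with hxa hxb
  · rw [hxa, h]
  · rw [hxb, h]
  · rfl

namespace FS

variable {V W : Type*} {X : SimpleGraph V} {Y : SimpleGraph W} {S : Set V}

theorem exists_eq_swap_trans_of_adj [DecidableEq V] {σ τ : V ≃ W} (h : (FS X Y).Adj σ τ) :
    ∃ a b, X.Adj a b ∧ τ = (Equiv.swap a b).trans σ := by
  obtain ⟨a, b, hab, -, ha, hb, hrest⟩ := h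
  refine ⟨a, b, hab, Equiv.ext fun w => ?_⟩
  rw [Equiv.trans_apply, Equiv.swap_apply_def]
  split_ifs with hwa hwb
  · rwa [hwa]
  · rwa [hwb]
  · exact hrest w hwa hwb

theorem image_eq_of_adj (hS : ∀ a b, X.Adj a b → (a ∈ S ↔ b ∈ S)) {σ τ : V ≃ W}
    (h : (FS X Y).Adj σ τ) : σ '' S = τ '' S := by
  classical
  obtain ⟨a, b, hab, rfl⟩ := exists_eq_swap_trans_of_adj h
  rw [Equiv.coe_trans, Set.image_comp, Equiv.image_swap_eq_self (hS a b hab)]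

theorem image_eq_of_reachable (hS : ∀ a b, X.Adj a b → (a ∈ S ↔ b ∈ S)) {σ τ : V ≃ W}
    (h : (FS X Y).Reachable σ τ) : σ '' S = τ '' S := by
  obtain ⟨p⟩ := h
  induction p with
  | nil => rfl
  | cons hadj _ ih => exact (image_eq_of_adj hS hadj).trans ih

theorem connectedComponentMk_ne_of_image_ne (hS : ∀ a b, X.Adj a b → (a ∈ S ↔ b ∈ S))
    {σ τ : V ≃ W} (h : σ '' S ≠ τ '' S) :
    (FS X Y).connectedComponentMk σ ≠ (FS X Y).connectedComponentMk τ :=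
  fun hστ => h (image_eq_of_reachable hS (ConnectedComponent.exact hστ))

theorem two_lt_card_connectedComponent [Finite V] (hS : ∀ a b, X.Adj a b → (a ∈ S ↔ b ∈ S))
    {a b b' : V} (ha : a ∈ S) (hb : b ∉ S) (hb' : b' ∉ S) (hbb' : b ≠ b') (σ : V ≃ W) :
    2 < Nat.card (FS X Y).ConnectedComponent := by
  classical
  have hne : ∀ {π π' : Equiv.Perm V}, π '' S ≠ π' '' S →
      (FS X Y).connectedComponentMk (π.trans σ) ≠ (FS X Y).connectedComponentMk (π'.trans σ) := by
    intro π π' hππ'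
    refine connectedComponentMk_ne_of_image_ne hS fun h => hππ' (σ.injective.image_injective ?_)
    rwa [Equiv.coe_trans, Equiv.coe_trans, Set.image_comp, Set.image_comp] at h
  have hab : b ≠ a := (ne_of_mem_of_not_mem ha hb).symm
  have hab' : b' ≠ a := (ne_of_mem_of_not_mem ha hb').symm
  have hS_ne : ∀ {c}, c ∉ S → c ≠ a → S ≠ insert c S \ {a} := fun hc hca h =>
    hc (h ▸ ⟨Set.mem_insert _ S, hca⟩)
  rw [← Set.ncard_univ, Set.two_lt_ncard_iff]
  refine ⟨_, _, _, trivial, trivial, trivial,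
    hne (π := 1) (π' := Equiv.swap a b) ?_, hne (π := 1) (π' := Equiv.swap a b') ?_,
    hne (π := Equiv.swap a b) (π' := Equiv.swap a b') ?_⟩ <;>
    simp only [Equiv.Perm.coe_one, Set.image_id, Equiv.image_swap_of_mem_of_notMem ha hb,
      Equiv.image_swap_of_mem_of_notMem ha hb']
  · exact hS_ne hb hab
  · exact hS_ne hb' hab'
  · intro h
    have hmem : b ∈ insert b' S \ {a} := h ▸ ⟨Set.mem_insert b S, hab⟩
    obtain ⟨hbb'' | hbS, -⟩ := hmem
    exacts [hbb' hbb'', hb hbS]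

end FS

theorem Fin.ncard_setOf_val_lt {r c : ℕ} (h : c ≤ r) : {j : Fin r | j.val < c}.ncard = c := by
  rw [Set.ncard_eq_toFinset_card', Set.toFinset_ofPred, Fin.card_filter_val_lt, min_eq_right h]

theorem Fin.ncard_setOf_iff_val_lt {r c : ℕ} (h : c ≤ r) (p : Prop) [Decidable p] :
    {j : Fin r | p ↔ j.val < c}.ncard = if p then c else r - c := by
  split_ifs with hp
  · simpa [hp] using Fin.ncard_setOf_val_lt h
  · have := Set.ncard_add_ncard_compl {j : Fin r | j.val < c}
    simp only [Set.compl_ofPred, Fin.ncard_setOf_val_lt h, Nat.card_eq_fintype_card,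
      Fintype.card_fin] at this
    simp only [hp, false_iff]
    omega

namespace SimpleGraph

variable {V : Type*}

def withinBlocks (G : SimpleGraph V) (S : Set V) : SimpleGraph V where
  Adj u v := G.Adj u v ∧ (u ∈ S ↔ v ∈ S)
  symm := ⟨fun _ _ h => ⟨h.1.symm, h.2.symm⟩⟩
  loopless := ⟨fun _ h => h.1.ne rfl⟩

theorem withinBlocks_le (G : SimpleGraph V) (S : Set V) : G.withinBlocks S ≤ G :=
  fun _ _ h => h.1

theorem mem_iff_mem_of_withinBlocks_adj {G : SimpleGraph V} {S : Set V} {u v : V}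
    (h : (G.withinBlocks S).Adj u v) : u ∈ S ↔ v ∈ S :=
  h.2

theorem neighborSet_withinBlocks_completeBipartiteGraph_inl {α β : Type*} (S : Set (α ⊕ β))
    (a : α) : ((completeBipartiteGraph α β).withinBlocks S).neighborSet (.inl a) =
      Sum.inr '' {b | Sum.inl a ∈ S ↔ Sum.inr b ∈ S} := by
  ext (w | w) <;> simp [withinBlocks]

theorem neighborSet_withinBlocks_completeBipartiteGraph_inr {α β : Type*} (S : Set (α ⊕ β))
    (b : β) : ((completeBipartiteGraph α β).withinBlocks S).neighborSet (.inr b) =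
      Sum.inl '' {a | Sum.inr b ∈ S ↔ Sum.inl a ∈ S} := by
  ext (w | w) <;> simp [withinBlocks]

end SimpleGraph

theorem minDeg_eq_of_forall_le {V : Type*} {G : SimpleGraph V} {k : ℕ}
    (hle : ∀ v, k ≤ (G.neighborSet v).ncard) (hex : ∃ v, (G.neighborSet v).ncard = k) :
    minDeg G = k := by
  obtain ⟨v, hv⟩ := hex
  have : Nonempty V := ⟨v⟩
  exact le_antisymm ((ciInf_le (OrderBot.bddBelow _) v).trans_eq hv) (le_ciInf hle)

def lowHalf (r : ℕ) : Set (Fin r ⊕ Fin r) := {v | Sum.elim Fin.val Fin.val v < (r + 1) / 2}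

@[simp]
theorem mem_lowHalf {r : ℕ} {v : Fin r ⊕ Fin r} :
    v ∈ lowHalf r ↔ Sum.elim Fin.val Fin.val v < (r + 1) / 2 :=
  Iff.rfl

open Classical in
theorem ncard_neighborSet_withinBlocks_lowHalf (r : ℕ) (v : Fin r ⊕ Fin r) :
    (((completeBipartiteGraph (Fin r) (Fin r)).withinBlocks (lowHalf r)).neighborSet v).ncard =
      if v ∈ lowHalf r then (r + 1) / 2 else r / 2 := by
  have hc : (r + 1) / 2 ≤ r := by omega
  cases v <;>
    simp only [neighborSet_withinBlocks_completeBipartiteGraph_inl,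
      neighborSet_withinBlocks_completeBipartiteGraph_inr,
      Set.ncard_image_of_injective _ Sum.inl_injective,
      Set.ncard_image_of_injective _ Sum.inr_injective, mem_lowHalf, Sum.elim_inl, Sum.elim_inr,
      Fin.ncard_setOf_iff_val_lt hc] <;>
    split_ifs <;> omega

theorem minDeg_withinBlocks_lowHalf {r : ℕ} (hr : 2 ≤ r) :
    minDeg ((completeBipartiteGraph (Fin r) (Fin r)).withinBlocks (lowHalf r)) = r / 2 := by
  refine minDeg_eq_of_forall_le (fun v => ?_) ⟨.inl ⟨r - 1, by omega⟩, ?_⟩ <;>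
    rw [ncard_neighborSet_withinBlocks_lowHalf]
  · split_ifs <;> omega
  · rw [if_neg (by simp only [mem_lowHalf, Sum.elim_inl]; omega)]

theorem statement8 (r : ℕ) (hr : 2 ≤ r) :
    ∃ X : SimpleGraph (Fin r ⊕ Fin r),
      X ≤ completeBipartiteGraph (Fin r) (Fin r) ∧
      minDeg X = r / 2 ∧
      2 < Nat.card (FS X (completeBipartiteGraph (Fin r) (Fin r))).ConnectedComponent := by
  let first : Fin r := ⟨0, by omega⟩
  let last : Fin r := ⟨r - 1, by omega⟩
  have h_first : Sum.inl first ∈ lowHalf r := by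
    simp only [mem_lowHalf, Sum.elim_inl, first]; omega
  have h_last : ∀ v : Fin r ⊕ Fin r, Sum.elim Fin.val Fin.val v = r - 1 → v ∉ lowHalf r := by
    intro v hv; simp only [mem_lowHalf, hv]; omega
  exact ⟨_, withinBlocks_le _ _, minDeg_withinBlocks_lowHalf hr,
    FS.two_lt_card_connectedComponent (fun _ _ => mem_iff_mem_of_withinBlocks_adj) h_first
      (h_last (.inl last) rfl) (h_last (.inr last) rfl) Sum.inl_ne_inr (Equiv.refl _)⟩
end

section
/- Let G be a finite simple graph on m vertices with minimum degree δ(G), and let Q ⊆ V(G) be a subset with |Q| ≥ 5 and 2|Q| + 3δ(G) ≥ 3m + 2. Then the induced subgraph G|_Q has at most two connected components. -/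
/-!
A vertex of a component `C` of `G[Q]` has all its neighbours outside `Q` or in `C`, so
`δ(G) ≤ (m - |Q|) + (|C| - 1)`, i.e. every component has more than `δ(G) + |Q| - m` vertices.
Three disjoint such components inside `Q` would give `3 (δ(G) + |Q| + 1 - m) ≤ |Q|`,
contradicting `2|Q| + 3δ(G) ≥ 3m + 2`.
-/

open SimpleGraph

namespace SimpleGraph

variable {V : Type*} [Finite V] (G : SimpleGraph V)

omit [Finite V] in
theorem minDeg_le_ncard_neighborSet (v : V) : minDeg G ≤ (G.neighborSet v).ncard :=
  ciInf_le (OrderBot.bddBelow _) v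

theorem ncard_neighborSet_lt_ncard_supp (v : V) :
    (G.neighborSet v).ncard < (G.connectedComponentMk v).supp.ncard := by
  refine Set.ncard_lt_ncard ((Set.ssubset_iff_of_subset fun w hw => ?_).mpr
    ⟨v, rfl, G.notMem_neighborSet_self⟩) (Set.toFinite _)
  exact (ConnectedComponent.connectedComponentMk_eq_of_adj hw).symm

theorem ncard_neighborSet_le_ncard_compl_add_ncard_neighborSet_induce {s : Set V} (v : s) :
    (G.neighborSet v).ncard ≤ sᶜ.ncard + ((G.induce s).neighborSet v).ncard := by
  calc (G.neighborSet v).ncard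
      ≤ (sᶜ ∪ Subtype.val '' (G.induce s).neighborSet v).ncard := by
        refine Set.ncard_le_ncard (fun w hw => ?_) (Set.toFinite _)
        by_cases hws : w ∈ s
        · exact Or.inr ⟨⟨w, hws⟩, hw, rfl⟩
        · exact Or.inl hws
    _ ≤ sᶜ.ncard + (Subtype.val '' (G.induce s).neighborSet v).ncard := Set.ncard_union_le _ _
    _ = sᶜ.ncard + ((G.induce s).neighborSet v).ncard := by
        rw [Set.ncard_image_of_injective _ Subtype.val_injective]

theorem minDeg_add_ncard_lt_card_add_ncard_supp (s : Set V)
    (c : (G.induce s).ConnectedComponent) :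
    minDeg G + s.ncard < Nat.card V + c.supp.ncard := by
  induction c using ConnectedComponent.ind with | h v =>
  have hδ := G.minDeg_le_ncard_neighborSet v
  have hs : s.ncard + sᶜ.ncard = Nat.card V := Set.ncard_add_ncard_compl s
  have hout := G.ncard_neighborSet_le_ncard_compl_add_ncard_neighborSet_induce v
  have hin := (G.induce s).ncard_neighborSet_lt_ncard_supp v
  omega

theorem sum_ncard_supp [Fintype G.ConnectedComponent] :
    ∑ c : G.ConnectedComponent, c.supp.ncard = Nat.card V := by
  rw [← Nat.card_congr (Equiv.sigmaFiberEquiv G.connectedComponentMk), Nat.card_sigma]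
  rfl

theorem card_connectedComponent_mul_le {t : ℕ}
    (ht : ∀ c : G.ConnectedComponent, t ≤ c.supp.ncard) :
    Nat.card G.ConnectedComponent * t ≤ Nat.card V := by
  have := Fintype.ofFinite G.ConnectedComponent
  rw [← G.sum_ncard_supp, Nat.card_eq_fintype_card, ← smul_eq_mul, ← Finset.card_univ]
  exact Finset.card_nsmul_le_sum _ _ _ fun c _ => ht c

end SimpleGraph

theorem statement10_general {V : Type*} [Fintype V] (m : ℕ) (G : SimpleGraph V)
    (hV : Fintype.card V = m) (Q : Set V)
    (hdeg : 2 * Q.ncard + 3 * minDeg G ≥ 3 * m + 2) :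
    Nat.card (G.induce Q).ConnectedComponent ≤ 2 := by
  have hcomp := (G.induce Q).card_connectedComponent_mul_le
    (t := minDeg G + Q.ncard + 1 - m) fun c => by
      have := G.minDeg_add_ncard_lt_card_add_ncard_supp Q c
      rw [Nat.card_eq_fintype_card, hV] at this
      omega
  rw [Nat.card_coe_set_eq] at hcomp
  by_contra! hthree
  have := (Nat.mul_le_mul_right _ hthree).trans hcomp
  omega

theorem statement10 {V : Type*} [Fintype V] (m : ℕ) (G : SimpleGraph V)
    (hV : Fintype.card V = m) (Q : Set V) (hQ : 5 ≤ Q.ncard)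
    (hdeg : 2 * Q.ncard + 3 * minDeg G ≥ 3 * m + 2) :
    Nat.card (G.induce Q).ConnectedComponent ≤ 2 :=
  statement10_general m G hV Q hdeg
end

section
/- Let G be a finite simple graph on m vertices with minimum degree δ(G), and let Q ⊆ V(G) be a subset with |Q| ≥ 5 and 2|Q| + 3δ(G) ≥ 3m + 2. Suppose the induced subgraph G|_Q has exactly two connected components F₁ and F₂. Then both F₁ and F₂ are Wilsonian, and for i = 1, 2: δ(G) + 1 + |Q| − m ≤ |V(F_i)| ≤ m − δ(G) − 1 and δ(F_i) ≥ δ(G) + |Q| − m. -/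
open SimpleGraph

/-- Biconnected: connected and with no cut vertex. -/
def Biconnected {V : Type*} (G : SimpleGraph V) : Prop :=
  G.Connected ∧ ∀ v : V, (G.induce {w | w ≠ v}).Connected

/-- The graph `θ₀`: a 6-cycle together with a seventh vertex joined to two
antipodal vertices of the cycle. -/
def theta0 : SimpleGraph (Fin 7) :=
  SimpleGraph.fromEdgeSet
    {s(0, 1), s(1, 2), s(2, 3), s(3, 4), s(4, 5), s(5, 0), s(6, 0), s(6, 3)}

/-- A graph is Wilsonian if it is biconnected, not bipartite, not isomorphic to a
cycle graph, and not isomorphic to `θ₀`. -/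
def Wilsonian {V : Type*} (G : SimpleGraph V) : Prop :=
  Biconnected G ∧ ¬ G.Colorable 2 ∧
    (∀ n : ℕ, 3 ≤ n → IsEmpty (G ≃g SimpleGraph.cycleGraph n)) ∧
    IsEmpty (G ≃g theta0)

/-- A graph is almost-Wilsonian if it is biconnected, not isomorphic to a cycle graph
on at least 4 vertices, and not isomorphic to `θ₀`. -/
def AlmostWilsonian {V : Type*} (G : SimpleGraph V) : Prop :=
  Biconnected G ∧
    (∀ n : ℕ, 4 ≤ n → IsEmpty (G ≃g SimpleGraph.cycleGraph n)) ∧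
    IsEmpty (G ≃g theta0)

/-!
Every vertex of `Q` loses at most `m - |Q|` neighbours when passing to `G|_Q`, so `G|_Q`, and
hence each of its components, has minimum degree `d ≥ δ(G) + |Q| - m`; in particular each
component has at least `d + 1` vertices. With exactly two components, each therefore has at most
`|Q| - d - 1` vertices, and the degree hypothesis turns this into `|F| + 3 ≤ 2 δ(F)`. Such a dense
graph is Wilsonian: any two vertices have a common neighbour (so it stays connected after deleting
a vertex, and every edge lies in a triangle), while cycles and `θ₀` have vertices of degree 2.
-/

namespace SimpleGraph

variable {W : Type*} (H : SimpleGraph W)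

lemma minDeg_le_ncard_neighborSet_s11 (v : W) : minDeg H ≤ (H.neighborSet v).ncard :=
  ciInf_le (OrderBot.bddBelow _) v

lemma le_minDeg [Nonempty W] {k : ℕ} (h : ∀ v, k ≤ (H.neighborSet v).ncard) : k ≤ minDeg H :=
  le_ciInf h

lemma nonempty_of_minDeg_ne_zero (h : minDeg H ≠ 0) : Nonempty W := by
  by_contra hW
  rw [not_nonempty_iff] at hW
  exact h (by rw [minDeg, iInf_of_isEmpty, Nat.sInf_empty])

lemma minDeg_add_one_le_card [Finite W] [Nonempty W] : minDeg H + 1 ≤ Nat.card W := by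
  obtain ⟨v⟩ := ‹Nonempty W›
  have hv : v ∉ H.neighborSet v := H.irrefl
  calc minDeg H + 1 ≤ (H.neighborSet v).ncard + 1 := by grw [minDeg_le_ncard_neighborSet_s11 H v]
    _ = (insert v (H.neighborSet v)).ncard := (Set.ncard_insert_of_notMem hv).symm
    _ ≤ Nat.card W := Set.ncard_le_card _

lemma ncard_neighborSet_induce (S : Set W) (v : S) :
    ((H.induce S).neighborSet v).ncard = (H.neighborSet v ∩ S).ncard := by
  rw [neighborSet_induce, ← Set.ncard_image_of_injective _ Subtype.val_injective,
    Set.image_preimage_eq_inter_range, Subtype.range_coe]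

lemma ncard_neighborSet_le_ncard_neighborSet_induce_add [Finite W] (S : Set W) (v : S) :
    (H.neighborSet v).ncard ≤ ((H.induce S).neighborSet v).ncard + Sᶜ.ncard := by
  rw [ncard_neighborSet_induce, ← Set.ncard_inter_add_ncard_sdiff_eq_ncard _ S]
  exact Nat.add_le_add_left (Set.ncard_le_ncard (Set.sdiff_subset_compl _ _)) _

lemma minDeg_sub_ncard_compl_le_minDeg_induce [Finite W] (S : Set W) [Nonempty S] :
    minDeg H - Sᶜ.ncard ≤ minDeg (H.induce S) :=
  le_minDeg _ fun v => Nat.sub_le_of_le_add <| (minDeg_le_ncard_neighborSet_s11 H v).trans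
    (ncard_neighborSet_le_ncard_neighborSet_induce_add H S v)

variable {H}

lemma ConnectedComponent.minDeg_le_minDeg_induce_supp (C : H.ConnectedComponent) :
    minDeg H ≤ minDeg (H.induce C.supp) := by
  have := C.nonempty_supp.to_subtype
  refine le_minDeg _ fun v => ?_
  have hsub : H.neighborSet v ⊆ C.supp := fun _ hw => C.mem_supp_of_adj_mem_supp v.2 hw
  rw [ncard_neighborSet_induce, Set.inter_eq_left.mpr hsub]
  exact minDeg_le_ncard_neighborSet_s11 H v

lemma ConnectedComponent.card_supp_add_card_supp_le [Finite W] {C C' : H.ConnectedComponent}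
    (h : C ≠ C') : Nat.card C.supp + Nat.card C'.supp ≤ Nat.card W := by
  rw [Nat.card_coe_set_eq, Nat.card_coe_set_eq,
    ← Set.ncard_union_eq (pairwise_disjoint_supp_connectedComponent H h)]
  exact Set.ncard_le_card _

lemma Iso.minDeg_eq {W' : Type*} {H' : SimpleGraph W'} (e : H ≃g H') : minDeg H = minDeg H' :=
  e.toEquiv.iInf_congr fun v => by
    rw [← Nat.card_coe_set_eq, ← Nat.card_coe_set_eq]
    exact Nat.card_congr (e.mapNeighborSet v).symm

variable (H)

lemma nonempty_neighborSet_inter_of_card_lt_two_mul_minDeg [Finite W]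
    (h : Nat.card W < 2 * minDeg H) (u v : W) : (H.neighborSet u ∩ H.neighborSet v).Nonempty :=
  Set.nonempty_inter_of_lt_ncard_add_ncard <| by
    have := minDeg_le_ncard_neighborSet_s11 H u
    have := minDeg_le_ncard_neighborSet_s11 H v
    omega

lemma connected_of_card_lt_two_mul_minDeg [Finite W] (h : Nat.card W < 2 * minDeg H) :
    H.Connected := by
  have := nonempty_of_minDeg_ne_zero H (by omega)
  refine ⟨fun u v => ?_⟩
  obtain ⟨w, hu, hv⟩ := nonempty_neighborSet_inter_of_card_lt_two_mul_minDeg H h u v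
  exact (Adj.reachable hu).trans (Adj.reachable hv).symm

lemma not_colorable_two_of_card_lt_two_mul_minDeg [Finite W] (h : Nat.card W < 2 * minDeg H) :
    ¬ H.Colorable 2 := by
  classical
  intro hc
  obtain ⟨u⟩ := nonempty_of_minDeg_ne_zero H (by omega)
  obtain ⟨v, huv⟩ : (H.neighborSet u).Nonempty :=
    Set.nonempty_of_ncard_ne_zero (by have := minDeg_le_ncard_neighborSet_s11 H u; omega)
  obtain ⟨w, hu, hv⟩ := nonempty_neighborSet_inter_of_card_lt_two_mul_minDeg H h u v
  exact hc.cliqueFree (by norm_num) {u, v, w} (is3Clique_triple_iff.mpr ⟨huv, hu, hv⟩)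

lemma biconnected_of_card_add_one_lt_two_mul_minDeg [Finite W]
    (h : Nat.card W + 1 < 2 * minDeg H) : Biconnected H := by
  refine ⟨connected_of_card_lt_two_mul_minDeg H (by omega), fun v => ?_⟩
  have hcompl : ({w | w ≠ v}ᶜ : Set W) = {v} := by ext; simp
  have hcard := Set.ncard_add_ncard_compl {w | w ≠ v}
  rw [hcompl, Set.ncard_singleton, ← Nat.card_coe_set_eq] at hcard
  have := nonempty_of_minDeg_ne_zero H (by omega)
  have := minDeg_add_one_le_card H
  have : Nonempty {w | w ≠ v} := Nat.card_pos_iff.mp (by omega) |>.1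
  have hδ := minDeg_sub_ncard_compl_le_minDeg_induce H {w | w ≠ v}
  rw [hcompl, Set.ncard_singleton] at hδ
  exact connected_of_card_lt_two_mul_minDeg _ (by omega)

lemma minDeg_cycleGraph_le_two (n : ℕ) : minDeg (cycleGraph (n + 3)) ≤ 2 := by
  have := minDeg_le_ncard_neighborSet_s11 (cycleGraph (n + 3)) 0
  rwa [← Nat.card_coe_set_eq, Nat.card_eq_fintype_card, card_neighborSet_eq_degree,
    cycleGraph_degree_three_le] at this

lemma minDeg_theta0_le_two : minDeg theta0 ≤ 2 := by
  have hnbr : theta0.neighborSet 6 = {0, 3} := by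
    ext w
    simp only [mem_neighborSet, theta0, fromEdgeSet_adj, Set.mem_insert_iff,
      Set.mem_singleton_iff]
    fin_cases w <;> decide
  have := minDeg_le_ncard_neighborSet_s11 theta0 6
  rwa [hnbr, Set.ncard_pair (by decide)] at this

lemma wilsonian_of_card_add_three_le_two_mul_minDeg [Finite W]
    (h : Nat.card W + 3 ≤ 2 * minDeg H) : Wilsonian H := by
  refine ⟨biconnected_of_card_add_one_lt_two_mul_minDeg H (by omega),
    not_colorable_two_of_card_lt_two_mul_minDeg H (by omega), fun n hn => ⟨fun e => ?_⟩,
    ⟨fun e => ?_⟩⟩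
  · obtain ⟨k, rfl⟩ := Nat.exists_eq_add_of_le' hn
    have hδ := e.minDeg_eq ▸ minDeg_cycleGraph_le_two k
    have hcard := Nat.card_congr e.toEquiv
    rw [Nat.card_fin] at hcard
    omega
  · have hδ := e.minDeg_eq ▸ minDeg_theta0_le_two
    have hcard := Nat.card_congr e.toEquiv
    rw [Nat.card_fin] at hcard
    omega

end SimpleGraph

theorem statement11_general {V : Type*} [Fintype V] (m : ℕ) (G : SimpleGraph V)
    (hV : Fintype.card V = m) (Q : Set V)
    (hdeg : 2 * Q.ncard + 3 * minDeg G ≥ 3 * m + 2)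
    (h2 : Nat.card (G.induce Q).ConnectedComponent = 2) :
    ∀ C : (G.induce Q).ConnectedComponent,
      Wilsonian ((G.induce Q).induce C.supp) ∧
      (minDeg G : ℤ) + 1 + Q.ncard - m ≤ Nat.card C.supp ∧
      (Nat.card C.supp : ℤ) ≤ m - minDeg G - 1 ∧
      (minDeg G : ℤ) + Q.ncard - m ≤ minDeg ((G.induce Q).induce C.supp) := by
  intro C
  have hsplit := Set.ncard_add_ncard_compl Q
  rw [Nat.card_eq_fintype_card, hV] at hsplit
  obtain ⟨v, -⟩ := C.nonempty_supp
  have : Nonempty Q := ⟨v⟩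
  have hδQ := minDeg_sub_ncard_compl_le_minDeg_induce G Q
  have : Nontrivial (G.induce Q).ConnectedComponent :=
    Finite.one_lt_card_iff_nontrivial.mp (by omega)
  obtain ⟨C', hne⟩ := exists_ne C
  have hsum := ConnectedComponent.card_supp_add_card_supp_le hne.symm
  rw [Nat.card_coe_set_eq Q] at hsum
  have := C.nonempty_supp.to_subtype
  have := C'.nonempty_supp.to_subtype
  have hlo := minDeg_add_one_le_card ((G.induce Q).induce C.supp)
  have hlo' := minDeg_add_one_le_card ((G.induce Q).induce C'.supp)
  have hC := C.minDeg_le_minDeg_induce_supp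
  have hC' := C'.minDeg_le_minDeg_induce_supp
  exact ⟨wilsonian_of_card_add_three_le_two_mul_minDeg _ (by omega), by omega, by omega, by omega⟩

theorem statement11 {V : Type*} [Fintype V] (m : ℕ) (G : SimpleGraph V)
    (hV : Fintype.card V = m) (Q : Set V) (hQ : 5 ≤ Q.ncard)
    (hdeg : 2 * Q.ncard + 3 * minDeg G ≥ 3 * m + 2)
    (h2 : Nat.card (G.induce Q).ConnectedComponent = 2) :
    ∀ C : (G.induce Q).ConnectedComponent,
      Wilsonian ((G.induce Q).induce C.supp) ∧
      (minDeg G : ℤ) + 1 + Q.ncard - m ≤ Nat.card C.supp ∧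
      (Nat.card C.supp : ℤ) ≤ m - minDeg G - 1 ∧
      (minDeg G : ℤ) + Q.ncard - m ≤ minDeg ((G.induce Q).induce C.supp) :=
  statement11_general m G hV Q hdeg h2
end

section
/- Let X and Y be finite simple graphs, each on n ≥ 6 vertices, with δ(X) > n/2, δ(Y) > n/2, δ(X) ≤ δ(Y), and 2δ(X) + 3δ(Y) ≥ 3n. Let σ : V(X) → V(Y) be a bijection and let u, v ∈ V(Y) be such that u′ = σ⁻¹(u) and v′ = σ⁻¹(v) are adjacent in X; suppose u and v are not (X,Y)-exchangeable from σ. Let w, x ∈ V(Y) satisfy: w ∈ N(u) ∩ N(v), w ∉ σ(N(u′)) ∪ σ(N(v′)), x ∈ σ(N(u′)) ∩ σ(N(v′)), and w adjacent to x in Y; write w′ = σ⁻¹(w), x′ = σ⁻¹(x), and R = N[w′] ∩ σ⁻¹(N[w]). Then R and N[x′] are disjoint. -/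
open SimpleGraph

/-!
Suppose some `z'` lies in `R ∩ N[x']`. The token `w` can then be walked from `w'` to `x'`,
through `z'` when `w'` and `x'` are not adjacent, along edges of `X` whose endpoints carry
adjacent tokens and without touching `u` or `v`. Now `u'`, `v'`, `x'` form a triangle of `X`
and the token `w` sits on `x'`, adjacent in `Y` to both `u` and `v`; rotating it around the
triangle exchanges `u` and `v`. Undoing the walk shows that `u` and `v` are exchangeable
from `σ`, a contradiction.
-/

section

variable {V W : Type*} {X : SimpleGraph V} {Y : SimpleGraph W}

namespace FS

lemma adj_swap_trans [DecidableEq V] (σ : V ≃ W) {a b : V} (hX : X.Adj a b)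
    (hY : Y.Adj (σ a) (σ b)) : (FS X Y).Adj σ ((Equiv.swap a b).trans σ) :=
  ⟨a, b, hX, hY, by simp, by simp, fun _ ha hb => by simp [Equiv.swap_apply_of_ne_of_ne ha hb]⟩

/-- The token on `p` travels once around the triangle `p a b`, exchanging the tokens on
`a` and `b`. -/
lemma reachable_swap_trans_of_triangle [DecidableEq V] (σ : V ≃ W) {p a b : V}
    (hpa : X.Adj p a) (hpb : X.Adj p b) (hab : X.Adj a b)
    (hYa : Y.Adj (σ p) (σ a)) (hYb : Y.Adj (σ p) (σ b)) :
    (FS X Y).Reachable σ ((Equiv.swap a b).trans σ) := by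
  set σ₁ := (Equiv.swap p a).trans σ
  set σ₂ := (Equiv.swap a b).trans σ₁
  have h₁ : (FS X Y).Adj σ σ₁ := adj_swap_trans σ hpa hYa
  have h₂ : (FS X Y).Adj σ₁ σ₂ := adj_swap_trans σ₁ hab <| by
    simpa [σ₁, Equiv.swap_apply_of_ne_of_ne hpb.ne.symm hab.ne.symm] using hYb
  have h₃ : (FS X Y).Adj σ₂ ((Equiv.swap b p).trans σ₂) :=
    adj_swap_trans σ₂ hpb.symm <| by
      simpa [σ₂, σ₁, Equiv.swap_apply_of_ne_of_ne hpa.ne hpb.ne] using hYa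
  have hrot : (Equiv.swap b p).trans σ₂ = (Equiv.swap a b).trans σ := by
    ext q
    simp only [σ₂, σ₁, Equiv.trans_apply, Equiv.swap_apply_def]
    grind [hpa.ne, hpb.ne, hab.ne]
  exact h₁.reachable.trans (h₂.reachable.trans (hrot ▸ h₃.reachable))

end FS

lemma exchangeable_iff_reachable [DecidableEq W] (σ : V ≃ W) (c d : W) :
    Exchangeable X Y σ c d ↔ (FS X Y).Reachable σ (σ.trans (Equiv.swap c d)) := by
  unfold Exchangeable
  convert Iff.rfl

lemma exchangeable_apply_iff_reachable_swap_trans [DecidableEq V] (σ : V ≃ W) (a b : V) :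
    Exchangeable X Y σ (σ a) (σ b) ↔ (FS X Y).Reachable σ ((Equiv.swap a b).trans σ) := by
  classical
  rw [exchangeable_iff_reachable]
  convert Iff.rfl using 2
  exact Equiv.ext fun q => (σ.injective.swap_apply a b q).symm

lemma Exchangeable.of_swap_trans [DecidableEq V] {σ : V ≃ W} {a b : V} {c d : W}
    (hX : X.Adj a b) (hY : Y.Adj (σ a) (σ b))
    (hac : σ a ≠ c) (had : σ a ≠ d) (hbc : σ b ≠ c) (hbd : σ b ≠ d)
    (h : Exchangeable X Y ((Equiv.swap a b).trans σ) c d) : Exchangeable X Y σ c d := by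
  classical
  rw [exchangeable_iff_reachable] at h ⊢
  have hσ : (FS X Y).Adj σ ((Equiv.swap a b).trans σ) := FS.adj_swap_trans σ hX hY
  have hσcd : (FS X Y).Adj (σ.trans (Equiv.swap c d))
      ((Equiv.swap a b).trans (σ.trans (Equiv.swap c d))) := by
    refine FS.adj_swap_trans _ hX ?_
    simpa [Equiv.swap_apply_of_ne_of_ne hac had, Equiv.swap_apply_of_ne_of_ne hbc hbd] using hY
  exact hσ.reachable.trans (h.trans (Equiv.trans_assoc _ _ _ ▸ hσcd.symm.reachable))

lemma exchangeable_of_triangle {σ : V ≃ W} {p a b : V}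
    (hpa : X.Adj p a) (hpb : X.Adj p b) (hab : X.Adj a b)
    (hYa : Y.Adj (σ p) (σ a)) (hYb : Y.Adj (σ p) (σ b)) :
    Exchangeable X Y σ (σ a) (σ b) := by
  classical
  exact (exchangeable_apply_iff_reachable_swap_trans σ a b).2 <|
    FS.reachable_swap_trans_of_triangle σ hpa hpb hab hYa hYb

lemma exchangeable_of_triangle_of_adj_apex {σ : V ≃ W} {p q a b : V}
    (hpa : X.Adj p a) (hpb : X.Adj p b) (hab : X.Adj a b) (hqp : X.Adj q p)
    (hYa : Y.Adj (σ q) (σ a)) (hYb : Y.Adj (σ q) (σ b)) (hYp : Y.Adj (σ q) (σ p)) :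
    Exchangeable X Y σ (σ a) (σ b) := by
  classical
  have hσa : ((Equiv.swap q p).trans σ) a = σ a := by
    simp [Equiv.swap_apply_of_ne_of_ne (σ.injective.ne_iff.mp hYa.ne).symm hpa.ne.symm]
  have hσb : ((Equiv.swap q p).trans σ) b = σ b := by
    simp [Equiv.swap_apply_of_ne_of_ne (σ.injective.ne_iff.mp hYb.ne).symm hpb.ne.symm]
  refine Exchangeable.of_swap_trans hqp hYp hYa.ne hYb.ne
    (σ.injective.ne hpa.ne) (σ.injective.ne hpb.ne) ?_
  rw [← hσa, ← hσb]
  exact exchangeable_of_triangle hpa hpb hab (by simpa [hσa] using hYa) (by simpa [hσb] using hYb)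

lemma exchangeable_of_not_disjoint {σ : V ≃ W} {p q a b : V}
    (hpa : X.Adj p a) (hpb : X.Adj p b) (hab : X.Adj a b)
    (hYa : Y.Adj (σ q) (σ a)) (hYb : Y.Adj (σ q) (σ b)) (hYp : Y.Adj (σ q) (σ p))
    (haq : ¬ X.Adj a q) (hbq : ¬ X.Adj b q)
    (h : ¬ Disjoint (insert q (X.neighborSet q) ∩ σ ⁻¹' insert (σ q) (Y.neighborSet (σ q)))
      (insert p (X.neighborSet p))) :
    Exchangeable X Y σ (σ a) (σ b) := by
  classical
  obtain ⟨z, ⟨hqz, hσz⟩, hpz⟩ := Set.not_disjoint_iff.mp h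
  simp only [Set.mem_insert_iff, mem_neighborSet, Set.mem_preimage] at hqz hσz hpz
  have hqp : q ≠ p := σ.injective.ne_iff.mp hYp.ne
  by_cases hadj : X.Adj q p
  · exact exchangeable_of_triangle_of_adj_apex hpa hpb hab hadj hYa hYb hYp
  have hzp : z ≠ p := by rintro rfl; exact hadj (hqz.resolve_left hqp.symm)
  have hXzp : X.Adj z p := (hpz.resolve_left hzp).symm
  have hXqz : X.Adj q z := hqz.resolve_left (by rintro rfl; exact hadj hXzp)
  have hYz : Y.Adj (σ q) (σ z) := hσz.resolve_left (σ.injective.ne hXqz.ne).symm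
  have hza : z ≠ a := by rintro rfl; exact haq hXqz.symm
  have hzb : z ≠ b := by rintro rfl; exact hbq hXqz.symm
  set τ := (Equiv.swap q z).trans σ
  have hτ : ∀ y, y ≠ q → y ≠ z → τ y = σ y := fun y hyq hyz => by
    simp [τ, Equiv.swap_apply_of_ne_of_ne hyq hyz]
  have hτz : τ z = σ q := by simp [τ]
  refine Exchangeable.of_swap_trans hXqz hYz hYa.ne hYb.ne
    (σ.injective.ne hza) (σ.injective.ne hzb) ?_
  have hτa := hτ a (σ.injective.ne_iff.mp hYa.ne).symm hza.symm
  have hτb := hτ b (σ.injective.ne_iff.mp hYb.ne).symm hzb.symm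
  have hτp := hτ p hqp.symm hXzp.ne.symm
  rw [← hτa, ← hτb]
  exact exchangeable_of_triangle_of_adj_apex hpa hpb hab hXzp
    (by rwa [hτz, hτa]) (by rwa [hτz, hτb]) (by rwa [hτz, hτp])

end

theorem statement16_general {V W : Type*}
    (X : SimpleGraph V) (Y : SimpleGraph W)
    (σ : V ≃ W) (u v : W)
    (hadj : X.Adj (σ.symm u) (σ.symm v))
    (hnex : ¬ Exchangeable X Y σ u v) (w x : W)
    (hw : w ∈ Y.neighborSet u ∩ Y.neighborSet v)
    (hwn : w ∉ (⇑σ '' X.neighborSet (σ.symm u)) ∪ (⇑σ '' X.neighborSet (σ.symm v)))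
    (hx : x ∈ (⇑σ '' X.neighborSet (σ.symm u)) ∩ (⇑σ '' X.neighborSet (σ.symm v)))
    (hwx : Y.Adj w x) :
    Disjoint
      ((insert (σ.symm w) (X.neighborSet (σ.symm w))) ∩
        (⇑σ ⁻¹' (insert w (Y.neighborSet w))))
      (insert (σ.symm x) (X.neighborSet (σ.symm x))) := by
  obtain ⟨a, rfl⟩ := σ.surjective u
  obtain ⟨b, rfl⟩ := σ.surjective v
  obtain ⟨q, rfl⟩ := σ.surjective w
  obtain ⟨p, rfl⟩ := σ.surjective x
  simp only [Equiv.symm_apply_apply, Set.mem_inter_iff, Set.mem_union, σ.injective.mem_set_image,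
    mem_neighborSet, not_or] at hadj hw hwn hx ⊢
  by_contra h
  exact hnex <| exchangeable_of_not_disjoint hx.1.symm hx.2.symm hadj hw.1.symm hw.2.symm hwx
    hwn.1 hwn.2 h

theorem statement16 {V W : Type*} [Fintype V] [Fintype W] (n : ℕ)
    (X : SimpleGraph V) (Y : SimpleGraph W)
    (hV : Fintype.card V = n) (hW : Fintype.card W = n) (hn : 6 ≤ n)
    (hdX : 2 * minDeg X > n) (hdY : 2 * minDeg Y > n)
    (hle : minDeg X ≤ minDeg Y)
    (hdeg : 2 * minDeg X + 3 * minDeg Y ≥ 3 * n)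
    (σ : V ≃ W) (u v : W)
    (hadj : X.Adj (σ.symm u) (σ.symm v))
    (hnex : ¬ Exchangeable X Y σ u v) (w x : W)
    (hw : w ∈ Y.neighborSet u ∩ Y.neighborSet v)
    (hwn : w ∉ (⇑σ '' X.neighborSet (σ.symm u)) ∪ (⇑σ '' X.neighborSet (σ.symm v)))
    (hx : x ∈ (⇑σ '' X.neighborSet (σ.symm u)) ∩ (⇑σ '' X.neighborSet (σ.symm v)))
    (hwx : Y.Adj w x) :
    Disjoint
      ((insert (σ.symm w) (X.neighborSet (σ.symm w))) ∩
        (⇑σ ⁻¹' (insert w (Y.neighborSet w))))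
      (insert (σ.symm x) (X.neighborSet (σ.symm x))) :=
  statement16_general X Y σ u v hadj hnex w x hw hwn hx hwx
end
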